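/- arXiv:2303.12470 — 14 statements merged into one kernel-verified Lean document; each statement's English description precedes it below -/
import Mathlib

section
/- Every Arf numerical semigroup has maximal embedding dimension, i.e., its embedding dimension equals its multiplicity. -/
/-- A numerical semigroup: a submonoid of ℕ with finite complement. -/
def IsNumericalSemigroup (S : Set ℕ) : Prop :=
  0 ∈ S ∧ (∀ a ∈ S, ∀ b ∈ S, a + b ∈ S) ∧ Sᶜ.Finite

/-- Arf property. -/
def IsArf (S : Set ℕ) : Prop :=
  ∀ x ∈ S, ∀ y ∈ S, ∀ z ∈ S, z ≤ y → y ≤ x → x + y - z ∈ S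

/-- Multiplicity: least positive element. -/
noncomputable def mult (S : Set ℕ) : ℕ := sInf (S \ {0})

/-- Minimal generators: nonzero elements not a sum of two nonzero elements. -/
def minGens (S : Set ℕ) : Set ℕ :=
  (S \ {0}) \ {n | ∃ a ∈ S \ {0}, ∃ b ∈ S \ {0}, n = a + b}

/-- Embedding dimension. -/
noncomputable def embDim (S : Set ℕ) : ℕ := Nat.card (minGens S)

/-- Frobenius number (largest gap). -/
noncomputable def Frob (S : Set ℕ) : ℕ := sSup Sᶜ

/-- Genus: number of gaps. -/
noncomputable def genus (S : Set ℕ) : ℕ := Nat.card ↥(Sᶜ)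

theorem arf_implies_med (S : Set ℕ) (hS : IsNumericalSemigroup S) (hA : IsArf S) :
    embDim S = mult S := by
  obtain ⟨h0, hadd, hfin⟩ := hS
  set m := mult S with hm
  -- S \ {0} is nonempty
  have hSinf : S.Infinite := by
    have := hfin.infinite_compl
    rwa [compl_compl] at this
  have hSne : (S \ {0}).Nonempty := ((hSinf.diff (Set.finite_singleton 0)).nonempty)
  have hmmem : m ∈ S \ {0} := Nat.sInf_mem hSne
  have hmS : m ∈ S := hmmem.1
  have hmpos : 0 < m := Nat.pos_of_ne_zero (by simpa using hmmem.2)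
  have hmle : ∀ n ∈ S \ ({0} : Set ℕ), m ≤ n := fun n hn => Nat.sInf_le hn
  -- multiples of m are in S
  have hmul : ∀ k : ℕ, k * m ∈ S := by
    intro k
    induction k with
    | zero => simpa using h0
    | succ k ih => rw [Nat.succ_mul]; exact hadd _ ih _ hmS
  -- large numbers are in S
  obtain ⟨B, hB⟩ := hfin.bddAbove
  have hlarge : ∀ n : ℕ, B < n → n ∈ S := by
    intro n hn
    by_contra h
    exact absurd (hB h) (not_le.mpr hn)
  -- the map n % m is a bijection from minGens S to Iio m
  have hbij : Set.BijOn (fun n => n % m) (minGens S) (Set.Iio m) := by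
    refine ⟨fun n _ => Nat.mod_lt n hmpos, ?_, ?_⟩
    · -- injective on minGens
      have key : ∀ n₁ ∈ minGens S, ∀ n₂ ∈ minGens S, n₁ % m = n₂ % m → n₁ < n₂ → False := by
        intro n₁ hn₁ n₂ hn₂ heq hlt
        obtain ⟨hn₂S, hn₂g⟩ := hn₂
        apply hn₂g
        have hd0 : (n₂ - n₁) % m = 0 := Nat.sub_mod_eq_zero_of_mod_eq heq.symm
        obtain ⟨k, hk⟩ := Nat.dvd_of_mod_eq_zero hd0
        have hk1 : 1 ≤ k := by
          rcases Nat.eq_zero_or_pos k with h | h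
          · rw [h, Nat.mul_zero] at hk; omega
          · exact h
        refine ⟨n₁ + (k - 1) * m, ⟨hadd _ hn₁.1.1 _ (hmul (k - 1)), ?_⟩, m, hmmem, ?_⟩
        · simp only [Set.mem_singleton_iff]
          have : n₁ ≠ 0 := by simpa using hn₁.1.2
          omega
        · obtain ⟨k', rfl⟩ : ∃ k', k = k' + 1 := ⟨k - 1, by omega⟩
          simp only [Nat.add_sub_cancel]
          have : m * (k' + 1) = k' * m + m := by ring
          omega
      intro n₁ hn₁ n₂ hn₂ heq
      simp only at heq
      rcases lt_trichotomy n₁ n₂ with h | h | h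
      · exact absurd (key n₁ hn₁ n₂ hn₂ heq h) (fun x => x)
      · exact h
      · exact absurd (key n₂ hn₂ n₁ hn₁ heq.symm h) (fun x => x)
    · -- surjective onto Iio m
      intro r hr
      simp only [Set.mem_Iio] at hr
      set T : Set ℕ := {n | n ∈ S ∧ n ≠ 0 ∧ n % m = r} with hT
      have hTne : T.Nonempty := by
        refine ⟨r + (B + 1) * m, hlarge _ ?_, ?_, ?_⟩
        · have : B + 1 ≤ (B + 1) * m := Nat.le_mul_of_pos_right _ hmpos
          omega
        · have : 0 < (B + 1) * m := by positivity
          omega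
        · simp [Nat.add_mul_mod_self_right, Nat.mod_eq_of_lt hr]
      set n := sInf T with hn
      have hnT : n ∈ T := Nat.sInf_mem hTne
      refine ⟨n, ⟨⟨hnT.1, by simpa using hnT.2.1⟩, ?_⟩, hnT.2.2⟩
      -- n is not a sum of two nonzero elements
      rintro ⟨a, ha, b, hb, hab⟩
      have hma : m ≤ a := hmle a ha
      have hmb : m ≤ b := hmle b hb
      -- by Arf, n - m ∈ S
      have hnmS : n - m ∈ S := by
        rcases le_total b a with h | h
        · have h2 := hA a ha.1 b hb.1 m hmS hmb h
          rw [hab]; exact h2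
        · have h2 := hA b hb.1 a ha.1 m hmS hma h
          rw [hab, Nat.add_comm a b]; exact h2
      have hmn : m < n := by omega
      have : n - m ∈ T := by
        refine ⟨hnmS, by omega, ?_⟩
        rw [← Nat.mod_eq_sub_mod (le_of_lt hmn)]
        exact hnT.2.2
      have := Nat.sInf_le this
      omega
  have := Nat.card_congr (Set.BijOn.equiv _ hbij)
  rw [embDim, this]
  rw [Nat.card_coe_set_eq]
  simp [Set.ncard_eq_toFinset_card']
end

section
/- A numerical semigroup S has maximal embedding dimension if and only if x + y - m(S) ∈ S for all nonzero x, y ∈ S, which holds if and only if (S \ {0}) - m(S) is a numerical semigroup. -/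
lemma ns_exists_bound {S : Set ℕ} (hS : IsNumericalSemigroup S) :
    ∃ N, ∀ n, N ≤ n → n ∈ S := by
  obtain ⟨N, hN⟩ := hS.2.2.bddAbove
  refine ⟨N + 1, fun n hn => ?_⟩
  by_contra h
  have := hN h
  omega

lemma ns_mult_mem {S : Set ℕ} (hS : IsNumericalSemigroup S) :
    mult S ∈ S ∧ mult S ≠ 0 := by
  obtain ⟨N, hN⟩ := ns_exists_bound hS
  have hne : (S \ {0}).Nonempty := ⟨N + 1, hN _ (by omega), by simp⟩
  have h := Nat.sInf_mem hne
  exact ⟨h.1, fun hc => h.2 (Set.mem_singleton_iff.mpr hc)⟩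

lemma ns_add_mul_mem {S : Set ℕ} (hS : IsNumericalSemigroup S) {u m : ℕ}
    (hu : u ∈ S) (hm : m ∈ S) (k : ℕ) : u + m * k ∈ S := by
  induction k with
  | zero => simpa using hu
  | succ k ih =>
    rw [Nat.mul_succ, ← add_assoc]
    exact hS.2.1 _ ih _ hm

lemma ns_mem_of_modeq {S : Set ℕ} (hS : IsNumericalSemigroup S) {u v m : ℕ}
    (hu : u ∈ S) (hm : m ∈ S) (h : u ≤ v) (hmod : v % m = u % m) : v ∈ S := by
  obtain ⟨k, hk⟩ := (Nat.modEq_iff_dvd' h).mp hmod.symm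
  have hv : v = u + m * k := by omega
  rw [hv]
  exact ns_add_mul_mem hS hu hm k

lemma sub_mod_eq {w m : ℕ} (hwm : m ≤ w) : (w - m) % m = w % m := by
  have h2 : w - m + m = w := Nat.sub_add_cancel hwm
  calc (w - m) % m = (w - m + m) % m := (Nat.add_mod_right _ _).symm
    _ = w % m := by rw [h2]

theorem med_characterization (S : Set ℕ) (hS : IsNumericalSemigroup S) :
    (embDim S = mult S ↔ ∀ x ∈ S \ {0}, ∀ y ∈ S \ {0}, x + y - mult S ∈ S) ∧
    (embDim S = mult S ↔ IsNumericalSemigroup ((fun s => s - mult S) '' (S \ {0}))) := by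
  obtain ⟨N, hN⟩ := ns_exists_bound hS
  obtain ⟨hmS, hm0'⟩ := ns_mult_mem hS
  set m := mult S with hmdef
  have hm0 : 0 < m := Nat.pos_of_ne_zero hm0'
  have hle : ∀ x ∈ S, x ≠ 0 → m ≤ x := fun x hx hx0 => Nat.sInf_le ⟨hx, hx0⟩
  set A : Set ℕ := insert m {w | w ∈ S ∧ w ≠ 0 ∧ w - m ∉ S} with hA
  set W : ℕ → ℕ := fun r => sInf {n | n ∈ S ∧ n ≠ 0 ∧ n % m = r} with hWdef
  have hWne : ∀ r, r < m → ({n | n ∈ S ∧ n ≠ 0 ∧ n % m = r}).Nonempty := by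
    intro r hr
    refine ⟨m * (N + 1) + r, hN _ (by nlinarith), by positivity, ?_⟩
    rw [Nat.mul_add_mod]
    exact Nat.mod_eq_of_lt hr
  have hW : ∀ r, r < m → W r ∈ S ∧ W r ≠ 0 ∧ W r % m = r :=
    fun r hr => Nat.sInf_mem (hWne r hr)
  have hWle : ∀ r, ∀ n ∈ S, n ≠ 0 → n % m = r → W r ≤ n :=
    fun r n hn hn0 hnm => Nat.sInf_le ⟨hn, hn0, hnm⟩
  -- W r lands in A
  have hWA : ∀ r, r < m → W r ∈ A := by
    intro r hr
    obtain ⟨h1, h2, h3⟩ := hW r hr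
    by_cases hwm : W r = m
    · exact Set.mem_insert_iff.mpr (Or.inl hwm)
    · refine Set.mem_insert_iff.mpr (Or.inr ⟨h1, h2, fun hc => ?_⟩)
      have hge : m ≤ W r := hle _ h1 h2
      have hmod : (W r - m) % m = r := by rw [sub_mod_eq hge, h3]
      have := hWle r _ hc (by omega) hmod
      omega
  -- every element of A with residue r equals W r
  have hAW : ∀ a ∈ A, a = W (a % m) := by
    intro a ha
    rcases Set.mem_insert_iff.mp ha with rfl | ⟨haS, ha0, ham⟩
    · rw [Nat.mod_self]
      have h0 := hW 0 hm0
      exact le_antisymm (hle _ h0.1 h0.2.1) (hWle 0 m hmS hm0' (Nat.mod_self m))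
    · have hr : a % m < m := Nat.mod_lt _ hm0
      have h0 := hW (a % m) hr
      have h1 : W (a % m) ≤ a := hWle _ a haS ha0 rfl
      by_contra hne
      have hlt : W (a % m) < a := lt_of_le_of_ne h1 (fun h => hne h.symm)
      have hma : m ≤ a := hle _ haS ha0
      -- a and W (a%m) congruent mod m, a strictly bigger, so a - m ≥ W (a%m)
      obtain ⟨k, hk⟩ := (Nat.modEq_iff_dvd' h1).mp h0.2.2
      have hk1 : 1 ≤ k := by
        rcases Nat.eq_zero_or_pos k with rfl | h
        · simp at hk; omega
        · exact h
      have hmk : m * 1 ≤ m * k := Nat.mul_le_mul_left m hk1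
      have hge : W (a % m) ≤ a - m := by rw [Nat.mul_one] at hmk; omega
      have hmod2 : (a - m) % m = W (a % m) % m := by rw [sub_mod_eq hma, h0.2.2]
      exact ham (ns_mem_of_modeq hS h0.1 hmS hge hmod2)
  -- A is in bijection with Fin m
  have hbij : Function.Bijective (fun r : Fin m => (⟨W r, hWA r r.2⟩ : A)) := by
    constructor
    · intro r s h
      have h' : W r = W s := congrArg Subtype.val h
      have hr := (hW r r.2).2.2
      have hs := (hW s s.2).2.2
      apply Fin.ext
      rw [← hr, ← hs, h']
    · rintro ⟨a, ha⟩
      refine ⟨⟨a % m, Nat.mod_lt _ hm0⟩, ?_⟩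
      exact Subtype.ext (hAW a ha).symm
  haveI hAfinite : Finite ↥A := Finite.of_surjective _ hbij.2
  have hAfin : A.Finite := Set.toFinite A
  have hAcard : Nat.card ↥A = m := by
    rw [← Nat.card_eq_of_bijective _ hbij]
    simp
  -- minGens ⊆ A
  have hsub : minGens S ⊆ A := by
    intro g hg
    obtain ⟨⟨hgS, hg0⟩, hgns⟩ := hg
    have hg0' : g ≠ 0 := by simpa using hg0
    by_cases h : g = m
    · exact Set.mem_insert_iff.mpr (Or.inl h)
    · refine Set.mem_insert_iff.mpr (Or.inr ⟨hgS, hg0', fun hc => ?_⟩)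
      have hge : m ≤ g := hle _ hgS hg0'
      refine hgns ⟨g - m, ⟨hc, by simp; omega⟩, m, ⟨hmS, by simpa using hm0'⟩, by omega⟩
  have hmgfin : (minGens S).Finite := hAfin.subset hsub
  -- the two key statements
  have key1 : embDim S = m ↔ ∀ x ∈ S \ {0}, ∀ y ∈ S \ {0}, x + y - m ∈ S := by
    constructor
    · intro he x hx y hy
      by_contra hc
      have hx0 : x ≠ 0 := by simpa using hx.2
      have hy0 : y ≠ 0 := by simpa using hy.2
      have hsA : x + y ∈ A := Set.mem_insert_iff.mpr (Or.inr
        ⟨hS.2.1 _ hx.1 _ hy.1, by omega, hc⟩)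
      have hsnm : x + y ∉ minGens S := fun h => h.2 ⟨x, hx, y, hy, rfl⟩
      have hss : minGens S ⊂ A := ⟨hsub, fun hAs => hsnm (hAs hsA)⟩
      have hlt := Set.ncard_lt_ncard hss hAfin
      rw [embDim, Nat.card_coe_set_eq] at he
      have hAnc : A.ncard = m := by rw [← Nat.card_coe_set_eq]; exact hAcard
      rw [hAnc] at hlt
      omega
    · intro hP
      have hWmg : ∀ r, r < m → W r ∈ minGens S := by
        intro r hr
        obtain ⟨h1, h2, h3⟩ := hW r hr
        refine ⟨⟨h1, by simpa using h2⟩, ?_⟩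
        rintro ⟨a, ha, b, hb, hab⟩
        have ha0 : a ≠ 0 := by simpa using ha.2
        have hb0 : b ≠ 0 := by simpa using hb.2
        have hma := hle _ ha.1 ha0
        have hmb := hle _ hb.1 hb0
        have h4 := hP a ha b hb
        have h5 : a + b - m ≠ 0 := by omega
        have h6 : (a + b - m) % m = r := by
          rw [sub_mod_eq (by omega), ← hab, h3]
        have := hWle r _ h4 h5 h6
        omega
      haveI : Finite ↥(minGens S) := hmgfin.to_subtype
      have hinj : Function.Injective
          (fun r : Fin m => (⟨W r, hWmg r r.2⟩ : minGens S)) := by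
        intro r s h
        have h' : W r = W s := congrArg Subtype.val h
        have hr := (hW r r.2).2.2
        have hs := (hW s s.2).2.2
        apply Fin.ext
        rw [← hr, ← hs, h']
      have h1 : m ≤ Nat.card ↥(minGens S) := by
        have := Nat.card_le_card_of_injective _ hinj
        simpa using this
      have h2 : Nat.card ↥(minGens S) ≤ Nat.card ↥A := Nat.card_mono hAfin hsub
      rw [embDim]
      omega
  have key2 : (∀ x ∈ S \ {0}, ∀ y ∈ S \ {0}, x + y - m ∈ S) ↔
      IsNumericalSemigroup ((fun s => s - m) '' (S \ {0})) := by
    constructor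
    · intro hP
      refine ⟨⟨m, ⟨hmS, by simpa using hm0'⟩, by simp⟩, ?_, ?_⟩
      · rintro a ⟨x, hx, rfl⟩ b ⟨y, hy, rfl⟩
        have hx0 : x ≠ 0 := by simpa using hx.2
        have hy0 : y ≠ 0 := by simpa using hy.2
        have hmx := hle _ hx.1 hx0
        have hmy := hle _ hy.1 hy0
        refine ⟨x + y - m, ⟨hP x hx y hy, by simp; omega⟩, by simp; omega⟩
      · refine (Set.finite_Iio N).subset ?_
        intro t ht
        simp only [Set.mem_Iio]
        by_contra h
        push_neg at h
        have h1 : t + m ∈ S := hN _ (by omega)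
        exact ht ⟨t + m, ⟨h1, by simp; omega⟩, by simp⟩
    · rintro ⟨hT0, hTadd, hTfin⟩ x hx y hy
      have hx0 : x ≠ 0 := by simpa using hx.2
      have hy0 : y ≠ 0 := by simpa using hy.2
      have hmx := hle _ hx.1 hx0
      have hmy := hle _ hy.1 hy0
      obtain ⟨s, hs, hseq⟩ := hTadd (x - m) ⟨x, hx, rfl⟩ (y - m) ⟨y, hy, rfl⟩
      have hs0 : s ≠ 0 := by simpa using hs.2
      have hms := hle _ hs.1 hs0
      simp only at hseq
      have heq : s = x + y - m := by omega
      rw [← heq]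
      exact hs.1
  exact ⟨key1, key1.trans key2⟩
end

section
/- If S is a numerical semigroup with maximal embedding dimension and minimal generating set {n₁ < n₂ < ⋯ < n_e}, then the Frobenius number of S equals n_e − n₁ and the genus of S equals (n₂ + ⋯ + n_e)/n₁ − (n₁ − 1)/2. -/
namespace MedAux

noncomputable def w (S : Set ℕ) (m r : ℕ) : ℕ := sInf {s | s ∈ S ∧ s % m = r % m}

variable {S : Set ℕ}

lemma w_congr {m a b : ℕ} (h : a % m = b % m) : w S m a = w S m b := by
  unfold w; rw [h]

lemma mod_set_nonempty (hS : IsNumericalSemigroup S) {m : ℕ} (hm : 0 < m) (r : ℕ) :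
    {s | s ∈ S ∧ s % m = r % m}.Nonempty := by
  have hinf : {s : ℕ | s % m = r % m}.Infinite := by
    apply Set.infinite_of_injective_forall_mem (f := fun k : ℕ => r % m + m * k)
    · intro a b h
      simp only [add_right_inj] at h
      exact Nat.eq_of_mul_eq_mul_left hm h
    · intro k
      simp only [Set.mem_setOf_eq, Nat.add_mul_mod_self_left]
      exact Nat.mod_mod_of_dvd r dvd_rfl
  have h2 : ({s : ℕ | s % m = r % m} \ Sᶜ).Infinite := hinf.diff hS.2.2
  obtain ⟨x, hx1, hx2⟩ := h2.nonempty
  exact ⟨x, by simp only [Set.mem_compl_iff, not_not] at hx2; exact ⟨hx2, hx1⟩⟩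

lemma w_mem (hS : IsNumericalSemigroup S) {m : ℕ} (hm : 0 < m) (r : ℕ) :
    w S m r ∈ S ∧ w S m r % m = r % m :=
  Nat.sInf_mem (mod_set_nonempty hS hm r)

lemma sdiff_nonempty (hS : IsNumericalSemigroup S) : (S \ {0}).Nonempty := by
  have h1 : S.Infinite := by
    have := hS.2.2.infinite_compl
    simpa using this
  exact (h1.diff (Set.finite_singleton 0)).nonempty

lemma mult_mem (hS : IsNumericalSemigroup S) : mult S ∈ S ∧ mult S ≠ 0 :=
  Nat.sInf_mem (sdiff_nonempty hS)

lemma mult_le (hS : IsNumericalSemigroup S) {n : ℕ} (hn : n ∈ S) (hn0 : n ≠ 0) :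
    mult S ≤ n := Nat.sInf_le ⟨hn, hn0⟩

lemma add_mul_mem (hS : IsNumericalSemigroup S) {a b : ℕ} (ha : a ∈ S) (hb : b ∈ S)
    (k : ℕ) : a + k * b ∈ S := by
  induction k with
  | zero => simpa using ha
  | succ n ih =>
      have := hS.2.1 _ ih _ hb
      have heq : a + (n + 1) * b = a + n * b + b := by ring
      rwa [heq]

lemma mem_iff_w_le (hS : IsNumericalSemigroup S) {m : ℕ} (hm : 0 < m) (hmS : m ∈ S) (n : ℕ) :
    n ∈ S ↔ w S m n ≤ n := by
  constructor
  · intro hn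
    exact Nat.sInf_le ⟨hn, rfl⟩
  · intro hle
    obtain ⟨hwS, hwmod⟩ := w_mem hS hm n
    have hdvd : m ∣ n - w S m n := (Nat.modEq_iff_dvd' hle).mp hwmod
    obtain ⟨k, hk⟩ := hdvd
    have : n = w S m n + k * m := by rw [mul_comm]; omega
    rw [this]
    exact add_mul_mem hS hwS hmS k

lemma notMem_iff_lt_w (hS : IsNumericalSemigroup S) {m : ℕ} (hm : 0 < m) (hmS : m ∈ S)
    (n : ℕ) : n ∉ S ↔ n < w S m n := by
  rw [mem_iff_w_le hS hm hmS]; omega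

lemma w_zero {m : ℕ} (h0 : 0 ∈ S) : w S m 0 = 0 :=
  Nat.le_zero.mp (Nat.sInf_le ⟨h0, rfl⟩)

lemma w_mod_self {m r : ℕ} (hr : r < m) (hS : IsNumericalSemigroup S) (hm : 0 < m) :
    w S m r % m = r := by
  rw [(w_mem hS hm r).2, Nat.mod_eq_of_lt hr]

lemma w_injOn (hS : IsNumericalSemigroup S) {m : ℕ} (hm : 0 < m) :
    Set.InjOn (w S m) (Finset.range m) := by
  intro a ha b hb h
  simp only [Finset.coe_range, Set.mem_Iio] at ha hb
  have h1 := w_mod_self ha hS hm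
  have h2 := w_mod_self hb hS hm
  rw [h] at h1
  omega

lemma w_gt_m (hS : IsNumericalSemigroup S) {m r : ℕ} (hm : m = mult S) (hr0 : 0 < r)
    (hrm : r < m) : m < w S m r := by
  have hm0 : 0 < m := by have := (mult_mem hS).2; omega
  obtain ⟨hwS, hwmod⟩ := w_mem hS hm0 r
  have hwmod' : w S m r % m = r := by rw [hwmod, Nat.mod_eq_of_lt hrm]
  have hw0 : w S m r ≠ 0 := by
    intro h; rw [h] at hwmod'; simp at hwmod'; omega
  have hge : m ≤ w S m r := by have := mult_le hS hwS hw0; omega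
  rcases eq_or_lt_of_le hge with h | h
  · exfalso; rw [← h] at hwmod'; simp at hwmod'; omega
  · exact h

/-- The Apéry candidate finset. -/
noncomputable def A (S : Set ℕ) (m : ℕ) : Finset ℕ := (Finset.range m).image (w S m)

lemma A_card (hS : IsNumericalSemigroup S) {m : ℕ} (hm : 0 < m) : (A S m).card = m := by
  rw [A, Finset.card_image_of_injOn (w_injOn hS hm), Finset.card_range]

lemma zero_mem_A (hS : IsNumericalSemigroup S) {m : ℕ} (hm : 0 < m) : 0 ∈ A S m := by
  rw [A, Finset.mem_image]
  exact ⟨0, Finset.mem_range.mpr hm, w_zero hS.1⟩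

lemma m_notMem_A_erase (hS : IsNumericalSemigroup S) {m : ℕ} (hm : m = mult S) :
    m ∉ (A S m).erase 0 := by
  have hm0 : 0 < m := by have := (mult_mem hS).2; omega
  intro h
  obtain ⟨r, hr, hwr⟩ := Finset.mem_image.mp (Finset.mem_erase.mp h).2
  rw [Finset.mem_range] at hr
  have := w_mod_self hr hS hm0
  rw [hwr] at this
  simp at this
  rcases Nat.eq_zero_or_pos r with h0 | h0
  · rw [h0] at hwr
    rw [w_zero hS.1] at hwr
    omega
  · omega

lemma minGens_subset (hS : IsNumericalSemigroup S) {m : ℕ} (hm : m = mult S) :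
    minGens S ⊆ ↑(insert m ((A S m).erase 0)) := by
  have hm0 : 0 < m := by have := (mult_mem hS).2; omega
  have hmS : m ∈ S := by rw [hm]; exact (mult_mem hS).1
  rintro n ⟨⟨hnS, hn0⟩, hn3⟩
  simp only [Set.mem_singleton_iff] at hn0
  simp only [Finset.coe_insert, Set.mem_insert_iff, Finset.mem_coe, Finset.mem_erase]
  have hmn : m ≤ n := by have := mult_le hS hnS hn0; omega
  rcases eq_or_lt_of_le hmn with h | h
  · left; exact h.symm
  · right
    refine ⟨hn0, ?_⟩
    -- n - m ∉ S
    have hnm : n - m ∉ S := by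
      intro hmem
      refine hn3 ⟨m, ⟨hmS, ?_⟩, n - m, ⟨hmem, ?_⟩, by omega⟩
      · simp only [Set.mem_singleton_iff]; omega
      · simp only [Set.mem_singleton_iff]; omega
    have hmod : (n - m) % m = n % m := by
      conv_rhs => rw [show n = (n - m) + m by omega]
      rw [Nat.add_mod_right]
    rw [notMem_iff_lt_w hS hm0 hmS, w_congr hmod] at hnm
    have hle : w S m n ≤ n := (mem_iff_w_le hS hm0 hmS n).mp hnS
    have hwmod : w S m n % m = n % m := (w_mem hS hm0 n).2
    have hdvd : m ∣ n - w S m n := (Nat.modEq_iff_dvd' hle).mp hwmod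
    obtain ⟨k, hk⟩ := hdvd
    have hk0 : k = 0 := by
      by_contra hk0
      have : m ≤ m * k := Nat.le_mul_of_pos_right m (by omega)
      omega
    rw [hk0, mul_zero] at hk
    have hwn : w S m n = n := by omega
    rw [A, Finset.mem_image]
    refine ⟨n % m, Finset.mem_range.mpr (Nat.mod_lt n hm0), ?_⟩
    rw [w_congr (Nat.mod_mod_of_dvd n dvd_rfl), hwn]


lemma gaps_finset (hS : IsNumericalSemigroup S) {m : ℕ} (hm0 : 0 < m) (hmS : m ∈ S) :
    hS.2.2.toFinset = (Finset.range m).biUnion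
      (fun r => (Finset.range (w S m r / m)).image (fun k => r + k * m)) := by
  ext n
  simp only [Set.Finite.mem_toFinset, Set.mem_compl_iff, Finset.mem_biUnion, Finset.mem_range,
    Finset.mem_image]
  rw [notMem_iff_lt_w hS hm0 hmS]
  constructor
  · intro hlt
    refine ⟨n % m, Nat.mod_lt n hm0, n / m, ?_, (Nat.mod_add_div' n m)⟩
    have hw : w S m (n % m) = w S m n := w_congr (Nat.mod_mod_of_dvd n dvd_rfl)
    rw [hw]
    have h1 : w S m n % m = n % m := (w_mem hS hm0 n).2
    have h2 := Nat.div_add_mod n m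
    have h3 := Nat.div_add_mod (w S m n) m
    by_contra hc
    push_neg at hc
    have : m * (w S m n / m) ≤ m * (n / m) := Nat.mul_le_mul_left m hc
    omega
  · rintro ⟨r, hr, k, hk, rfl⟩
    have hw : w S m (r + k * m) = w S m r :=
      w_congr (by rw [Nat.add_mul_mod_self_right])
    rw [hw]
    have h3 := Nat.div_add_mod (w S m r) m
    have h4 : w S m r % m = r := w_mod_self hr hS hm0
    have h5 : m * k < m * (w S m r / m) := (Nat.mul_lt_mul_left hm0).mpr hk
    have h6 : k * m = m * k := Nat.mul_comm k m
    omega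

lemma genus_formula (hS : IsNumericalSemigroup S) {m : ℕ} (hm0 : 0 < m) (hmS : m ∈ S) :
    genus S = ∑ r ∈ Finset.range m, w S m r / m := by
  rw [genus, Nat.card_eq_card_finite_toFinset hS.2.2, gaps_finset hS hm0 hmS,
    Finset.card_biUnion]
  · apply Finset.sum_congr rfl
    intro r _
    rw [Finset.card_image_of_injective _ (fun a b h => by
      simp only [add_right_inj] at h
      exact Nat.eq_of_mul_eq_mul_right hm0 h), Finset.card_range]
  · intro r1 h1 r2 h2 hne
    apply Finset.disjoint_left.mpr
    rintro x hx1 hx2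
    obtain ⟨k1, _, hk1⟩ := Finset.mem_image.mp hx1
    obtain ⟨k2, _, hk2⟩ := Finset.mem_image.mp hx2
    have e1 : x % m = r1 := by rw [← hk1, Nat.add_mul_mod_self_right, Nat.mod_eq_of_lt (Finset.mem_range.mp h1)]
    have e2 : x % m = r2 := by rw [← hk2, Nat.add_mul_mod_self_right, Nat.mod_eq_of_lt (Finset.mem_range.mp h2)]
    exact hne (e1 ▸ e2)


end MedAux

open MedAux in
theorem med_frobenius_genus (S : Set ℕ) (hS : IsNumericalSemigroup S)
    (hMED : embDim S = mult S) (G : Finset ℕ) (hG : minGens S = ↑G) (hne : G.Nonempty) :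
    Frob S = G.max' hne - G.min' hne ∧
    (genus S : ℚ) = ((∑ x ∈ G, (x : ℚ)) - (G.min' hne : ℚ)) / (G.min' hne : ℚ)
      - ((G.min' hne : ℚ) - 1) / 2 := by
  set m := mult S with hm
  have hm0 : 0 < m := Nat.pos_of_ne_zero (mult_mem hS).2
  have hmS : m ∈ S := (mult_mem hS).1
  by_cases hm1 : m = 1
  · -- degenerate case S = ℕ
    have h1S : (1 : ℕ) ∈ S := by rw [← hm1]; exact hmS
    have hall : ∀ n : ℕ, n ∈ S := by
      intro n
      have := add_mul_mem hS hS.1 h1S n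
      simpa using this
    have hcompl : Sᶜ = ∅ := by ext n; simp [hall n]
    have hminG : minGens S = {1} := by
      ext n
      simp only [minGens, Set.mem_diff, Set.mem_singleton_iff, Set.mem_setOf_eq]
      constructor
      · rintro ⟨⟨_, hn0⟩, hn3⟩
        by_contra hn1
        exact hn3 ⟨1, ⟨h1S, by omega⟩, n - 1, ⟨hall _, by omega⟩, by omega⟩
      · rintro rfl
        refine ⟨⟨h1S, by omega⟩, ?_⟩
        rintro ⟨a, ⟨_, ha0⟩, b, ⟨_, hb0⟩, hab⟩
        omega
    have hGeq : G = {1} := by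
      apply Finset.coe_injective
      rw [← hG, hminG, Finset.coe_singleton]
    subst hGeq
    constructor
    · rw [Frob, hcompl]
      rw [csSup_empty, Finset.max'_singleton, Finset.min'_singleton]
      rfl
    · rw [genus, hcompl]
      rw [Finset.min'_singleton, Finset.sum_singleton]
      norm_num [Nat.card_eq_fintype_card]
  · have hm2 : 2 ≤ m := by omega
    have hsub : G ⊆ insert m ((A S m).erase 0) := by
      intro x hx
      have hxm : x ∈ minGens S := by rw [hG]; exact hx
      exact minGens_subset hS hm hxm
    have hcardT : (insert m ((A S m).erase 0)).card = m := by
      rw [Finset.card_insert_of_notMem (m_notMem_A_erase hS hm),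
        Finset.card_erase_of_mem (zero_mem_A hS hm0), A_card hS hm0]
      omega
    have hcardG : G.card = m := by
      have h1 : Nat.card ↥(minGens S) = G.card := by
        rw [hG, Nat.card_coe_set_eq, Set.ncard_coe_finset]
      rw [embDim] at hMED
      omega
    have hGeq : G = insert m ((A S m).erase 0) :=
      Finset.eq_of_subset_of_card_le hsub (by rw [hcardT, hcardG])
    have hmG : m ∈ G := by rw [hGeq]; exact Finset.mem_insert_self _ _
    have hminG : G.min' hne = m := by
      apply le_antisymm (Finset.min'_le _ _ hmG)
      apply Finset.le_min'
      intro x hx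
      have hxm : x ∈ minGens S := by rw [hG]; exact hx
      obtain ⟨⟨hxS, hx0⟩, -⟩ := hxm
      have := mult_le hS hxS (by simpa using hx0)
      omega
    set W := G.max' hne with hW
    have hw1G : w S m 1 ∈ G := by
      rw [hGeq]
      apply Finset.mem_insert_of_mem
      rw [Finset.mem_erase]
      constructor
      · have := w_gt_m hS hm one_pos (by omega); omega
      · rw [A, Finset.mem_image]; exact ⟨1, Finset.mem_range.mpr (by omega), rfl⟩
    have hWgt : m < W := lt_of_lt_of_le (w_gt_m hS hm one_pos (by omega)) (Finset.le_max' _ _ hw1G)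
    have hWub : ∀ r, r < m → w S m r ≤ W := by
      intro r hr
      rcases Nat.eq_zero_or_pos r with rfl | hr0
      · rw [w_zero hS.1]; omega
      · apply Finset.le_max'
        rw [hGeq]
        apply Finset.mem_insert_of_mem
        rw [Finset.mem_erase]
        refine ⟨?_, by rw [A, Finset.mem_image]; exact ⟨r, Finset.mem_range.mpr hr, rfl⟩⟩
        have := w_gt_m hS hm hr0 hr; omega
    have hWG : W ∈ G := G.max'_mem hne
    have hWA : W ∈ A S m := by
      rw [hGeq] at hWG
      rcases Finset.mem_insert.mp hWG with h | h
      · omega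
      · exact (Finset.mem_erase.mp h).2
    obtain ⟨rs, hrs, hrsW⟩ := Finset.mem_image.mp hWA
    rw [Finset.mem_range] at hrs
    have hWmod : W % m = rs := by rw [← hrsW]; exact w_mod_self hrs hS hm0
    have hfr : Frob S = W - m := by
      have hmemC : W - m ∈ Sᶜ := by
        rw [Set.mem_compl_iff, notMem_iff_lt_w hS hm0 hmS]
        have hcong : w S m (W - m) = w S m rs := by
          apply w_congr
          have h1 : (W - m) % m = W % m := by
            conv_rhs => rw [show W = (W - m) + m by omega]
            rw [Nat.add_mod_right]
          rw [h1, hWmod, Nat.mod_eq_of_lt hrs]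
        rw [hcong, hrsW]
        omega
      have hub : ∀ n ∈ Sᶜ, n ≤ W - m := by
        intro n hn
        rw [Set.mem_compl_iff, notMem_iff_lt_w hS hm0 hmS] at hn
        have hcong : w S m n = w S m (n % m) := w_congr (Nat.mod_mod_of_dvd n dvd_rfl).symm
        have hle : w S m n ≤ W := by rw [hcong]; exact hWub _ (Nat.mod_lt n hm0)
        have hmod : w S m n % m = n % m := (w_mem hS hm0 n).2
        have hdvd : m ∣ w S m n - n := (Nat.modEq_iff_dvd' (le_of_lt hn)).mp hmod.symm
        obtain ⟨k, hk⟩ := hdvd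
        have hk0 : k ≠ 0 := by rintro rfl; simp at hk; omega
        have : m ≤ m * k := Nat.le_mul_of_pos_right m (by omega)
        omega
      apply le_antisymm
      · exact csSup_le ⟨W - m, hmemC⟩ hub
      · exact le_csSup ⟨W - m, fun n hn => hub n hn⟩ hmemC
    constructor
    · rw [hfr, hminG]
    · have hgen := genus_formula hS hm0 hmS
      have hsumG : ∑ x ∈ G, (x : ℚ) = (m : ℚ) + ∑ r ∈ Finset.range m, (w S m r : ℚ) := by
        rw [hGeq, Finset.sum_insert (m_notMem_A_erase hS hm),
          Finset.sum_erase _ (by norm_num : ((0 : ℕ) : ℚ) = 0)]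
        congr 1
        rw [A, Finset.sum_image]
        intro x hx y hy h
        exact w_injOn hS hm0 (by simpa using hx) (by simpa using hy) h
      have hnat : ∑ r ∈ Finset.range m, w S m r
          = m * genus S + ∑ r ∈ Finset.range m, r := by
        rw [hgen, Finset.mul_sum, ← Finset.sum_add_distrib]
        apply Finset.sum_congr rfl
        intro r hr
        rw [Finset.mem_range] at hr
        have h1 := Nat.div_add_mod (w S m r) m
        have h2 := w_mod_self hr hS hm0
        omega
      have hgauss : (∑ r ∈ Finset.range m, r) * 2 = m * (m - 1) := Finset.sum_range_id_mul_two m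
      have hQ : ∑ r ∈ Finset.range m, (w S m r : ℚ)
          = (m : ℚ) * (genus S : ℚ) + ∑ r ∈ Finset.range m, (r : ℚ) := by
        have := congrArg (Nat.cast : ℕ → ℚ) hnat
        push_cast at this
        exact this
      have hgaussQ : (∑ r ∈ Finset.range m, (r : ℚ)) * 2 = (m : ℚ) * ((m : ℚ) - 1) := by
        have := congrArg (Nat.cast : ℕ → ℚ) hgauss
        push_cast [Nat.cast_sub (by omega : 1 ≤ m)] at this
        exact this
      rw [hminG, hsumG]
      have hmQ : (m : ℚ) ≠ 0 := by positivity
      field_simp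
      linear_combination (-2 : ℚ) * hQ - hgaussQ
end

section
/- If S is an Arf numerical semigroup with Frobenius number F and S ≠ {0} ∪ {F+1, F+2, ...}, then S \ {m(S)} is an Arf numerical semigroup with Frobenius number F. -/
theorem arf_remove_mult (S : Set ℕ) (F : ℕ) (hS : IsNumericalSemigroup S) (hA : IsArf S)
    (hF : Frob S = F) (hne : S ≠ {0} ∪ {n : ℕ | F + 1 ≤ n}) :
    IsNumericalSemigroup (S \ {mult S}) ∧ IsArf (S \ {mult S}) ∧ Frob (S \ {mult S}) = F := by
  obtain ⟨h0, hadd, hfin⟩ := hS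
  set m := mult S with hm
  -- S \ {0} is nonempty
  have hSne : (S \ {0}).Nonempty := by
    by_contra h
    rw [Set.not_nonempty_iff_eq_empty] at h
    have : Sᶜ = {n : ℕ | n ≠ 0} := by
      ext n
      constructor
      · rintro hn
        intro hn0
        exact hn (hn0 ▸ h0)
      · intro hn hnS
        have : n ∈ S \ {0} := ⟨hnS, hn⟩
        simp [h] at this
    rw [this] at hfin
    exact Set.Infinite.mono (fun n (hn : 1 ≤ n) => Nat.one_le_iff_ne_zero.mp hn)
      (Set.Ici_infinite 1) hfin
  have hmmem : m ∈ S \ {0} := Nat.sInf_mem hSne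
  have hmS : m ∈ S := hmmem.1
  have hm0 : m ≠ 0 := hmmem.2
  have hmle : ∀ s ∈ S, s ≠ 0 → m ≤ s := fun s hs hs0 => Nat.sInf_le ⟨hs, hs0⟩
  -- Sᶜ is nonempty
  have hcne : Sᶜ.Nonempty := by
    by_contra h
    rw [Set.not_nonempty_iff_eq_empty] at h
    have hF0 : F = 0 := by
      rw [← hF]; unfold Frob; rw [h]; exact csSup_empty
    apply hne
    rw [hF0]
    ext n
    have : n ∈ S := by
      by_contra hn; rw [← Set.mem_compl_iff, h] at hn; exact hn
    simp only [Set.mem_union, Set.mem_singleton_iff, Set.mem_setOf_eq]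
    exact ⟨fun _ => by omega, fun _ => this⟩
  have hbdd : BddAbove Sᶜ := hfin.bddAbove
  have hFmem : F ∈ Sᶜ := hF ▸ Nat.sSup_mem hcne hbdd
  have hleF : ∀ n ∈ Sᶜ, n ≤ F := fun n hn => hF ▸ le_csSup hbdd hn
  -- m < F
  have hmF : m < F := by
    rcases lt_or_ge m F with h | h
    · exact h
    have hmne : m ≠ F := fun he => hFmem (he ▸ hmS)
    have hmgt : F + 1 ≤ m := by omega
    exact absurd (by
      ext n
      simp only [Set.mem_union, Set.mem_singleton_iff, Set.mem_setOf_eq]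
      constructor
      · intro hn
        rcases eq_or_ne n 0 with h0' | h0'
        · exact Or.inl h0'
        · exact Or.inr (le_trans hmgt (hmle n hn h0'))
      · rintro (rfl | hn)
        · exact h0
        · by_contra hnS
          have := hleF n hnS
          omega) hne
  -- positive elements of S \ {m} are > m
  have hkey : ∀ s ∈ S \ {m}, s ≠ 0 → m < s := by
    rintro s ⟨hs, hsm⟩ hs0
    have := hmle s hs hs0
    simp only [Set.mem_singleton_iff] at hsm
    omega
  -- complement
  have hcompl : (S \ {m})ᶜ = Sᶜ ∪ {m} := by
    ext n
    simp only [Set.mem_compl_iff, Set.mem_diff, Set.mem_union, Set.mem_singleton_iff]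
    tauto
  refine ⟨⟨⟨h0, fun h => hm0 (h.symm)⟩, ?_, ?_⟩, ?_, ?_⟩
  · -- closed under addition
    rintro a ⟨ha, ham⟩ b ⟨hb, hbm⟩
    refine ⟨hadd a ha b hb, ?_⟩
    simp only [Set.mem_singleton_iff] at *
    rcases eq_or_ne a 0 with rfl | ha0
    · simpa using hbm
    rcases eq_or_ne b 0 with rfl | hb0
    · simpa using ham
    have h1 := hkey a ⟨ha, ham⟩ ha0
    have h2 := hkey b ⟨hb, hbm⟩ hb0
    omega
  · -- finite complement
    rw [hcompl]
    exact hfin.union (Set.finite_singleton m)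
  · -- Arf
    rintro x ⟨hx, hxm⟩ y ⟨hy, hym⟩ z ⟨hz, hzm⟩ hzy hyx
    refine ⟨hA x hx y hy z hz hzy hyx, ?_⟩
    simp only [Set.mem_singleton_iff] at *
    rcases eq_or_ne z 0 with rfl | hz0
    · rcases eq_or_ne y 0 with rfl | hy0
      · simpa using hxm
      · have h1 := hkey x ⟨hx, hxm⟩ (by omega)
        have h2 := hkey y ⟨hy, hym⟩ hy0
        omega
    · have h1 := hkey z ⟨hz, hzm⟩ hz0
      omega
  · -- Frobenius number
    unfold Frob
    rw [hcompl, csSup_union hbdd hcne (Set.finite_singleton m).bddAbove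
      (Set.singleton_nonempty m), csSup_singleton]
    rw [show sSup Sᶜ = F from hF]
    exact sup_eq_left.mpr (le_of_lt hmF)
end

section
/- A numerical semigroup S is an Arf semigroup if and only if every member of the associated sequence S₀ = S, S_{n+1} = S_n \ {m(S_n)} has maximal embedding dimension. -/
/-- Associated sequence: S₀ = S, S_{n+1} = S_n minus its least positive element. -/
noncomputable def assocSeq (S : Set ℕ) : ℕ → Set ℕ
  | 0 => S
  | n + 1 => assocSeq S n \ {sInf (assocSeq S n \ {0})}

section Aux

lemma large_mem {S : Set ℕ} (hS : IsNumericalSemigroup S) {n : ℕ} (hn : sSup Sᶜ < n) :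
    n ∈ S := by
  by_contra h
  exact absurd (le_csSup hS.2.2.bddAbove h) (not_le.mpr hn)

lemma pos_nonempty {S : Set ℕ} (hS : IsNumericalSemigroup S) : (S \ {0}).Nonempty :=
  ⟨sSup Sᶜ + 1, large_mem hS (lt_add_one _), by simp⟩

lemma mult_mem' {S : Set ℕ} (hS : IsNumericalSemigroup S) : mult S ∈ S \ {0} :=
  Nat.sInf_mem (pos_nonempty hS)

lemma mult_pos {S : Set ℕ} (hS : IsNumericalSemigroup S) : 0 < mult S :=
  Nat.pos_of_ne_zero (by simpa using (mult_mem' hS).2)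

lemma mult_le' {S : Set ℕ} {s : ℕ} (h : s ∈ S) (h0 : s ≠ 0) : mult S ≤ s :=
  Nat.sInf_le ⟨h, by simpa using h0⟩

lemma mul_mult_mem {S : Set ℕ} (hS : IsNumericalSemigroup S) (k : ℕ) : k * mult S ∈ S := by
  induction k with
  | zero => simpa using hS.1
  | succ k ih =>
    have := hS.2.1 _ ih _ (mult_mem' hS).1
    simpa [Nat.succ_mul] using this

/-- The MED characterisation: embDim = mult iff x + y - m stays in S. -/
lemma med_iff {S : Set ℕ} (hS : IsNumericalSemigroup S) :
    embDim S = mult S ↔ ∀ x ∈ S \ {0}, ∀ y ∈ S \ {0}, x + y - mult S ∈ S := by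
  set m := mult S with hm
  have hmS : m ∈ S \ {0} := mult_mem' hS
  have hm0 : 0 < m := mult_pos hS
  haveI : NeZero m := ⟨hm0.ne'⟩
  set f : ↥(minGens S) → ZMod m := fun x => ((x : ℕ) : ZMod m) with hf
  -- injectivity
  have hinj : Function.Injective f := by
    intro a b hab
    have hmod : (a : ℕ) ≡ (b : ℕ) [MOD m] := (ZMod.natCast_eq_natCast_iff _ _ _).mp hab
    -- wlog via a helper
    have key : ∀ u v : ↥(minGens S), (u : ℕ) ≤ (v : ℕ) → (u : ℕ) ≡ (v : ℕ) [MOD m] →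
        (u : ℕ) = (v : ℕ) := by
      intro u v huv hmod
      obtain ⟨k, hk⟩ := (Nat.modEq_iff_dvd' huv).mp hmod
      rcases Nat.eq_zero_or_pos k with rfl | hk0
      · omega
      · exfalso
        have hvdecomp : (v : ℕ) = (u : ℕ) + m * k := by omega
        have hmk : m * k ∈ S \ {0} := by
          refine ⟨by simpa [mul_comm] using mul_mult_mem hS k, ?_⟩
          simp [Nat.mul_ne_zero hm0.ne' hk0.ne']
        have hu : (u : ℕ) ∈ S \ {0} := u.2.1
        exact v.2.2 ⟨(u : ℕ), hu, m * k, hmk, hvdecomp⟩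
    rcases le_total (a : ℕ) (b : ℕ) with h | h
    · exact Subtype.ext (key a b h hmod)
    · exact Subtype.ext (key b a h hmod.symm).symm
  have hbij : Function.Bijective f ↔ embDim S = m := by
    rw [Nat.bijective_iff_injective_and_card]
    simp only [hinj, true_and, Nat.card_zmod]
    rfl
  rw [← hbij]
  constructor
  · -- bijective → condition
    intro hb x hx y hy
    obtain ⟨g, hg⟩ := hb.2 ((x + y : ℕ) : ZMod m)
    have hgmod : (g : ℕ) ≡ x + y [MOD m] := (ZMod.natCast_eq_natCast_iff _ _ _).mp hg
    have hxy : x + y ∈ S := hS.2.1 x hx.1 y hy.1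
    rcases lt_trichotomy (g : ℕ) (x + y) with h | h | h
    · obtain ⟨k, hk⟩ := (Nat.modEq_iff_dvd' h.le).mp hgmod
      have hk0 : 0 < k := by
        rcases Nat.eq_zero_or_pos k with rfl | h'
        · omega
        · exact h'
      have hkk : m * k = m * (k - 1) + m := by
        rcases k with _ | k'
        · omega
        · simp [Nat.mul_succ]
      have : x + y - m = (g : ℕ) + m * (k - 1) := by
        have hym : m ≤ y := mult_le' hy.1 (by simpa using hy.2)
        omega
      rw [this]
      exact hS.2.1 _ g.2.1.1 _ (by simpa [mul_comm] using mul_mult_mem hS (k - 1))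
    · exfalso
      exact g.2.2 ⟨x, hx, y, hy, h⟩
    · exfalso
      obtain ⟨k, hk⟩ := (Nat.modEq_iff_dvd' h.le).mp hgmod.symm
      have hk0 : 0 < k := by
        rcases Nat.eq_zero_or_pos k with rfl | h'
        · omega
        · exact h'
      have hxy0 : x + y ≠ 0 := by
        have := hx.2; simp only [Set.mem_singleton_iff] at this; omega
      have hmk : m * k ∈ S \ {0} :=
        ⟨by simpa [mul_comm] using mul_mult_mem hS k, by
          simp [Nat.mul_ne_zero hm0.ne' hk0.ne']⟩
      exact g.2.2 ⟨x + y, ⟨hxy, by simpa using hxy0⟩, m * k, hmk, by omega⟩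
  · -- condition → bijective
    intro hcond
    refine ⟨hinj, ?_⟩
    intro r
    set A : Set ℕ := {s | s ∈ S ∧ s ≠ 0 ∧ (s : ZMod m) = r} with hA
    have hAne : A.Nonempty := by
      refine ⟨r.val + m * (sSup Sᶜ + 1), ?_, ?_, ?_⟩
      · apply large_mem hS
        have : sSup Sᶜ + 1 ≤ m * (sSup Sᶜ + 1) := Nat.le_mul_of_pos_left _ hm0
        omega
      · have : 0 < m * (sSup Sᶜ + 1) := by positivity
        omega
      · push_cast
        simp [ZMod.natCast_val, ZMod.cast_id, ZMod.natCast_self]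
    set w := sInf A with hw
    have hwA : w ∈ A := Nat.sInf_mem hAne
    have hwmin : w ∈ minGens S := by
      refine ⟨⟨hwA.1, by simpa using hwA.2.1⟩, ?_⟩
      rintro ⟨a, ha, b, hb, hab⟩
      have ham : m ≤ a := mult_le' ha.1 (by simpa using ha.2)
      have hbm : m ≤ b := mult_le' hb.1 (by simpa using hb.2)
      have ht : a + b - m ∈ S := hcond a ha b hb
      have htA : a + b - m ∈ A := by
        refine ⟨ht, by omega, ?_⟩
        have : ((a + b - m : ℕ) : ZMod m) = ((a + b : ℕ) : ZMod m) - (m : ZMod m) := by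
          rw [← Nat.cast_sub (by omega)]
        rw [this]
        simp only [ZMod.natCast_self, sub_zero]
        rw [← hab]
        exact hwA.2.2
      have := Nat.sInf_le htA
      omega
    exact ⟨⟨w, hwmin⟩, hwA.2.2⟩

lemma assoc_ns {S : Set ℕ} (hS : IsNumericalSemigroup S) (n : ℕ) :
    IsNumericalSemigroup (assocSeq S n) := by
  induction n with
  | zero => exact hS
  | succ k ih =>
    have hmk : sInf (assocSeq S k \ {0}) = mult (assocSeq S k) := rfl
    refine ⟨⟨ih.1, ?_⟩, ?_, ?_⟩
    · simp only [Set.mem_singleton_iff, hmk]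
      exact fun h => (mult_pos ih).ne h
    · rintro a ⟨haS, ha⟩ b ⟨hbS, hb⟩
      simp only [Set.mem_singleton_iff, hmk] at ha hb ⊢
      refine ⟨ih.2.1 a haS b hbS, ?_⟩
      rcases Nat.eq_zero_or_pos a with rfl | ha0
      · simpa [hmk] using hb
      · have : mult (assocSeq S k) ≤ a := mult_le' haS ha0.ne'
        rcases Nat.eq_zero_or_pos b with rfl | hb0
        · simpa [hmk] using ha
        · have hb' : mult (assocSeq S k) ≤ b := mult_le' hbS hb0.ne'
          simp only [Set.mem_singleton_iff]
          omega
    · show ((assocSeq S k \ {sInf (assocSeq S k \ {0})})ᶜ).Finite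
      rw [Set.compl_eq_univ_diff, Set.diff_diff_right]
      apply Set.Finite.union
      · simpa [Set.compl_eq_univ_diff] using ih.2.2
      · exact (Set.finite_singleton _).inter_of_right _

lemma arf_step {S : Set ℕ} (hS : IsNumericalSemigroup S) (h : IsArf S) :
    IsArf (S \ {mult S}) := by
  intro x hx y hy z hz hzy hyx
  have hm0 : 0 < mult S := mult_pos hS
  rcases Nat.eq_zero_or_pos z with rfl | hz0
  · -- x + y - 0 = x + y
    have hxy : x + y ∈ S := hS.2.1 x hx.1 y hy.1
    refine ⟨by simpa using hxy, ?_⟩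
    simp only [Set.mem_singleton_iff]
    rcases Nat.eq_zero_or_pos y with rfl | hy0
    · rcases Nat.eq_zero_or_pos x with rfl | hx0
      · simp; omega
      · have : mult S ≤ x := mult_le' hx.1 hx0.ne'
        have hxm : x ≠ mult S := by simpa using hx.2
        omega
    · have : mult S ≤ y := mult_le' hy.1 hy0.ne'
      have hym : y ≠ mult S := by simpa using hy.2
      omega
  · have hmem : x + y - z ∈ S := h x hx.1 y hy.1 z hz.1 hzy hyx
    refine ⟨hmem, ?_⟩
    have hzm : mult S ≤ z := mult_le' hz.1 hz0.ne'
    have hzm' : z ≠ mult S := by simpa using hz.2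
    simp only [Set.mem_singleton_iff]
    omega

lemma assoc_arf {S : Set ℕ} (hS : IsNumericalSemigroup S) (h : IsArf S) (n : ℕ) :
    IsArf (assocSeq S n) := by
  induction n with
  | zero => exact h
  | succ k ih =>
    have := arf_step (assoc_ns hS k) ih
    simpa [assocSeq, mult] using this

lemma sInf_shape {S : Set ℕ} {z : ℕ} (hz : z ∈ S) (hz0 : 0 < z) :
    sInf (({0} ∪ {s ∈ S | z ≤ s}) \ {0}) = z := by
  have hset : ({0} ∪ {s ∈ S | z ≤ s}) \ {0} = {s ∈ S | z ≤ s} := by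
    ext s
    simp only [Set.mem_diff, Set.mem_union, Set.mem_singleton_iff, Set.mem_setOf_eq]
    constructor
    · rintro ⟨h1 | h1, h2⟩
      · exact absurd h1 h2
      · exact h1
    · intro h
      exact ⟨Or.inr h, by omega⟩
  rw [hset]
  apply le_antisymm
  · exact Nat.sInf_le ⟨hz, le_refl z⟩
  · have := Nat.sInf_mem (⟨z, hz, le_refl z⟩ : ({s ∈ S | z ≤ s} : Set ℕ).Nonempty)
    exact this.2

lemma reach {S : Set ℕ} (hS : IsNumericalSemigroup S) :
    ∀ z, z ∈ S → 0 < z → ∃ n, assocSeq S n = {0} ∪ {s ∈ S | z ≤ s} := by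
  intro z
  induction z using Nat.strong_induction_on with
  | _ z ih =>
    intro hz hz0
    by_cases hmin : ∀ w ∈ S, 0 < w → z ≤ w
    · refine ⟨0, ?_⟩
      ext s
      simp only [assocSeq, Set.mem_union, Set.mem_singleton_iff, Set.mem_setOf_eq]
      constructor
      · intro hs
        rcases Nat.eq_zero_or_pos s with rfl | hs0
        · exact Or.inl rfl
        · exact Or.inr ⟨hs, hmin s hs hs0⟩
      · rintro (rfl | ⟨hs, _⟩)
        · exact hS.1
        · exact hs
    · push_neg at hmin
      obtain ⟨w, hwS, hw0, hwz⟩ := hmin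
      set B := {w | w ∈ S ∧ 0 < w ∧ w < z} with hB
      have hBne : B.Nonempty := ⟨w, hwS, hw0, hwz⟩
      have hBbdd : BddAbove B := ⟨z, fun x hx => hx.2.2.le⟩
      have hw0mem : sSup B ∈ B := Nat.sSup_mem hBne hBbdd
      obtain ⟨n, hn⟩ := ih (sSup B) hw0mem.2.2 hw0mem.1 hw0mem.2.1
      refine ⟨n + 1, ?_⟩
      have hsinf : sInf (assocSeq S n \ {0}) = sSup B := by
        rw [hn]; exact sInf_shape hw0mem.1 hw0mem.2.1
      show assocSeq S n \ {sInf (assocSeq S n \ {0})} = _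
      rw [hsinf, hn]
      ext s
      simp only [Set.mem_diff, Set.mem_union, Set.mem_singleton_iff, Set.mem_setOf_eq]
      constructor
      · rintro ⟨rfl | ⟨hsS, hsge⟩, hne⟩
        · exact Or.inl rfl
        · right
          refine ⟨hsS, ?_⟩
          by_contra hlt
          push_neg at hlt
          have : s ∈ B := ⟨hsS, by omega, hlt⟩
          have := le_csSup hBbdd this
          omega
      · rintro (rfl | ⟨hsS, hsge⟩)
        · exact ⟨Or.inl rfl, by have := hw0mem.2.1; omega⟩
        · have := hw0mem.2.2
          exact ⟨Or.inr ⟨hsS, by omega⟩, by omega⟩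

end Aux

theorem arf_iff_assocSeq_med (S : Set ℕ) (hS : IsNumericalSemigroup S) :
    IsArf S ↔ ∀ n : ℕ, embDim (assocSeq S n) = mult (assocSeq S n) := by
  constructor
  · intro hA n
    have hns := assoc_ns hS n
    rw [med_iff hns]
    have harf := assoc_arf hS hA n
    intro x hx y hy
    have hm := mult_mem' hns
    have hmx : mult (assocSeq S n) ≤ x := mult_le' hx.1 (by simpa using hx.2)
    have hmy : mult (assocSeq S n) ≤ y := mult_le' hy.1 (by simpa using hy.2)
    rcases le_total y x with h | h
    · exact harf x hx.1 y hy.1 _ hm.1 hmy h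
    · have := harf y hy.1 x hx.1 _ hm.1 hmx h
      rwa [add_comm] at this
  · intro hmed x hx y hy z hz hzy hyx
    rcases Nat.eq_zero_or_pos z with rfl | hz0
    · simpa using hS.2.1 x hx y hy
    · obtain ⟨n, hn⟩ := reach hS z hz hz0
      have hns := assoc_ns hS n
      have hC := (med_iff hns).mp (hmed n)
      have hmn : mult (assocSeq S n) = z := by
        show sInf (assocSeq S n \ {0}) = z
        rw [hn]; exact sInf_shape hz hz0
      have hxmem : x ∈ assocSeq S n \ {0} := by
        rw [hn]
        exact ⟨Or.inr ⟨hx, le_trans hzy hyx⟩, by simp; omega⟩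
      have hymem : y ∈ assocSeq S n \ {0} := by
        rw [hn]
        exact ⟨Or.inr ⟨hy, hzy⟩, by simp; omega⟩
      have hres := hC x hxmem y hymem
      rw [hmn] at hres
      have hsub : assocSeq S n ⊆ S := by
        rw [hn]
        rintro s (rfl | hs)
        · exact hS.1
        · exact hs.1
      exact hsub hres
end

section
/- Let S be an Arf numerical semigroup with Frobenius number F, and let x be a special gap of S with x ≠ F and x < m(S). Then S ∪ {x} is an Arf numerical semigroup with Frobenius number F if and only if S ∪ {x} has maximal embedding dimension. -/
theorem arf_adjoin_iff_med (S : Set ℕ) (F x : ℕ) (hS : IsNumericalSemigroup S) (hA : IsArf S)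
    (hF : Frob S = F) (hxS : x ∉ S) (h2x : 2 * x ∈ S) (hxs : ∀ s ∈ S, s ≠ 0 → x + s ∈ S)
    (hxF : x ≠ F) (hxm : x < mult S) :
    (IsNumericalSemigroup (S ∪ {x}) ∧ IsArf (S ∪ {x}) ∧ Frob (S ∪ {x}) = F) ↔
      embDim (S ∪ {x}) = mult (S ∪ {x}) := by
  obtain ⟨h0S, haddS, hfinS⟩ := hS
  set T := S ∪ {x} with hTdef
  have hmemT : ∀ t, t ∈ T ↔ t ∈ S ∨ t = x := by intro t; simp [hTdef]; tauto
  have hx0 : x ≠ 0 := fun h => hxS (h ▸ h0S)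
  have hxpos : 0 < x := Nat.pos_of_ne_zero hx0
  have hxT : x ∈ T := (hmemT x).2 (Or.inr rfl)
  have hST : S ⊆ T := Set.subset_union_left
  have h0T : 0 ∈ T := hST h0S
  have hSgt : ∀ s ∈ S, s ≠ 0 → x < s := fun s hs hs0 =>
    lt_of_lt_of_le hxm (Nat.sInf_le ⟨hs, hs0⟩)
  have hTge : ∀ t ∈ T, t ≠ 0 → x ≤ t := by
    intro t ht ht0
    rcases (hmemT t).1 ht with h | rfl
    · exact (hSgt t h ht0).le
    · exact le_rfl
  have haddT : ∀ a ∈ T, ∀ b ∈ T, a + b ∈ T := by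
    intro a ha b hb
    rcases (hmemT a).1 ha with ha' | rfl
    · rcases (hmemT b).1 hb with hb' | rfl
      · exact hST (haddS a ha' b hb')
      · rcases eq_or_ne a 0 with rfl | ha0
        · simpa using hxT
        · exact hST (by rw [add_comm]; exact hxs a ha' ha0)
    · rcases (hmemT b).1 hb with hb' | rfl
      · rcases eq_or_ne b 0 with rfl | hb0
        · simpa using hxT
        · exact hST (hxs b hb' hb0)
      · exact hST (by rw [← two_mul]; exact h2x)
  have hfinTc : Tᶜ.Finite := hfinS.subset (Set.compl_subset_compl.2 hST)
  have hnumT : IsNumericalSemigroup T := ⟨h0T, haddT, hfinTc⟩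
  have hFmem : F ∉ S := by
    have : sSup Sᶜ ∈ Sᶜ := Set.Nonempty.csSup_mem ⟨x, hxS⟩ hfinS
    rwa [show sSup Sᶜ = F from hF] at this
  have hgtF : ∀ n, F < n → n ∈ S := by
    intro n hn
    by_contra hns
    have : n ≤ sSup Sᶜ := le_csSup hfinS.bddAbove hns
    rw [show sSup Sᶜ = F from hF] at this
    omega
  have hFT : F ∉ T := by
    intro h
    rcases (hmemT F).1 h with h | h
    · exact hFmem h
    · exact hxF h.symm
  have hfrobT : Frob T = F := by
    apply le_antisymm
    · apply csSup_le ⟨F, hFT⟩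
      intro t ht
      by_contra hlt
      push_neg at hlt
      exact ht (hST (hgtF t hlt))
    · exact le_csSup hfinTc.bddAbove hFT
  have hmultT : mult T = x :=
    le_antisymm (Nat.sInf_le ⟨hxT, hx0⟩)
      (le_csInf ⟨x, hxT, hx0⟩ fun t ht => hTge t ht.1 (by simpa using ht.2))
  have haddmul : ∀ t ∈ T, ∀ k : ℕ, t + k * x ∈ T := by
    intro t ht k
    induction k with
    | zero => simpa using ht
    | succ k ih => simpa [Nat.succ_mul, ← add_assoc] using haddT _ ih x hxT
  have hA' : ∀ t ∈ T, ∀ u ∈ T, t % x = u % x → t < u → u - x ∈ T := by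
    intro t ht u hu hmod hlt
    obtain ⟨k, hk⟩ := (Nat.modEq_iff_dvd' hlt.le).1 hmod
    rcases k with _ | k
    · omega
    · have h3 : t + k * x ∈ T := haddmul t ht k
      have hk2 : u - t = k * x + x := by rw [hk]; ring
      obtain ⟨e, he⟩ : ∃ e, e = k * x := ⟨_, rfl⟩
      rw [← he] at h3 hk2
      have heq : u - x = t + e := by omega
      rwa [heq]
  have hgen : ∀ g, g ∈ minGens T ↔
      g ∈ T ∧ g ≠ 0 ∧ ¬ ∃ a, (a ∈ T ∧ a ≠ 0) ∧ ∃ b, (b ∈ T ∧ b ≠ 0) ∧ g = a + b := by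
    intro g
    simp only [minGens, Set.mem_diff, Set.mem_singleton_iff, Set.mem_setOf_eq]
    tauto
  have hxgen : x ∈ minGens T := by
    rw [hgen]
    refine ⟨hxT, hx0, ?_⟩
    rintro ⟨a, ⟨haT, ha0⟩, b, ⟨hbT, hb0⟩, hab⟩
    have := hTge a haT ha0
    have := hTge b hbT hb0
    omega
  have hB : ∀ g ∈ minGens T, g ≠ x → g - x ∉ T := by
    intro g hg hgne hmem
    obtain ⟨hgT, hg0, hnsum⟩ := (hgen g).1 hg
    have hgx : x < g := lt_of_le_of_ne (hTge g hgT hg0) (Ne.symm hgne)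
    exact hnsum ⟨x, ⟨hxT, hx0⟩, g - x, ⟨hmem, by omega⟩, by omega⟩
  have hC : ∀ g ∈ minGens T, ∀ g' ∈ minGens T, g % x = g' % x → g = g' := by
    intro g hg g' hg' hmod
    by_contra hne
    obtain ⟨hgT, hg0, -⟩ := (hgen g).1 hg
    obtain ⟨hg'T, hg'0, -⟩ := (hgen g').1 hg'
    have hge := hTge g hgT hg0
    have hg'e := hTge g' hg'T hg'0
    rcases lt_trichotomy g g' with h | h | h
    · exact hB g' hg' (by omega) (hA' g hgT g' hg'T hmod h)
    · exact hne h
    · exact hB g hg (by omega) (hA' g' hg'T g hgT hmod.symm h)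
  -- the key intermediate property
  set P : Prop := ∀ a ∈ T, ∀ b ∈ T, a ≠ 0 → b ≠ 0 → a + b - x ∈ T with hPdef
  -- Arf T → P
  have hArfP : IsArf T → P := by
    intro hArf a ha b hb ha0 hb0
    have hax := hTge a ha ha0
    have hbx := hTge b hb hb0
    rcases le_total b a with h | h
    · exact hArf a ha b hb x hxT hbx h
    · have := hArf b hb a ha x hxT hax h
      rwa [add_comm] at this
  -- P → Arf T
  have hPArf : P → IsArf T := by
    intro hP p hp q hq r hr hrq hqp
    rcases eq_or_ne r 0 with rfl | hr0
    · simpa using haddT p hp q hq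
    · rcases (hmemT r).1 hr with hrS | rfl
      · have hrx : x < r := hSgt r hrS hr0
        have hqS : q ∈ S := by
          rcases (hmemT q).1 hq with h | rfl
          · exact h
          · omega
        have hpS : p ∈ S := by
          rcases (hmemT p).1 hp with h | rfl
          · exact h
          · omega
        exact hST (hA p hpS q hqS r hrS hrq hqp)
      · exact hP p hp q hq (by omega) (by omega)
  -- the counting map
  let φ : ↥(minGens T) → Fin x := fun g => ⟨(g : ℕ) % x, Nat.mod_lt _ hxpos⟩
  have hφinj : Function.Injective φ := by
    intro g g' h
    have : (g : ℕ) % x = (g' : ℕ) % x := congrArg Fin.val h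
    exact Subtype.ext (hC g g.2 g' g'.2 this)
  -- P → card = x
  have hPcard : P → Nat.card ↥(minGens T) = x := by
    intro hP
    have hφsurj : Function.Surjective φ := by
      intro r
      rcases eq_or_ne r.val 0 with hr0 | hr0
      · exact ⟨⟨x, hxgen⟩, Fin.ext (by simp [φ, hr0])⟩
      · -- least element of T congruent to r
        set W : Set ℕ := {t | t ∈ T ∧ t % x = r.val} with hWdef
        have hWne : W.Nonempty := by
          refine ⟨r.val + x * (F + 1), hST (hgtF _ (by nlinarith [r.isLt])), ?_⟩
          simp [Nat.add_mul_mod_self_left, Nat.mod_eq_of_lt r.isLt]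
        have hwW : sInf W ∈ W := Nat.sInf_mem hWne
        set w := sInf W with hwdef
        have hwT : w ∈ T := hwW.1
        have hwmod : w % x = r.val := hwW.2
        have hw0 : w ≠ 0 := by
          intro h
          rw [h] at hwmod
          simp at hwmod
          omega
        have hwgen : w ∈ minGens T := by
          rw [hgen]
          refine ⟨hwT, hw0, ?_⟩
          rintro ⟨a, ⟨haT, ha0⟩, b, ⟨hbT, hb0⟩, hab⟩
          have hax := hTge a haT ha0
          have hbx := hTge b hbT hb0
          have hwx : w - x ∈ T := by
            have := hP a haT b hbT ha0 hb0
            rwa [← hab] at this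
          have hwxmod : (w - x) % x = r.val := by
            have h1 : w - x + x = w := by omega
            calc (w - x) % x = (w - x + x) % x := (Nat.add_mod_right _ _).symm
            _ = r.val := by rw [h1, hwmod]
          have : w ≤ w - x := Nat.sInf_le ⟨hwx, hwxmod⟩
          omega
        exact ⟨⟨w, hwgen⟩, Fin.ext (by simpa [φ] using hwmod)⟩
    calc Nat.card ↥(minGens T) = Nat.card (Fin x) :=
          Nat.card_eq_of_bijective φ ⟨hφinj, hφsurj⟩
      _ = x := by simp
  -- card = x → P
  have hcardP : Nat.card ↥(minGens T) = x → P := by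
    intro hcard
    by_contra hnP
    rw [hPdef] at hnP
    push_neg at hnP
    obtain ⟨a, haT, b, hbT, ha0, hb0, hab⟩ := hnP
    have hax := hTge a haT ha0
    have hbx := hTge b hbT hb0
    have habT : a + b ∈ T := haddT a haT b hbT
    set w := a + b with hwdef
    set r := w % x with hrdef
    have hr0 : r ≠ 0 := by
      intro hr
      -- w - x is a positive multiple of x, hence in T
      have hdvd : x ∣ w := Nat.dvd_of_mod_eq_zero hr
      obtain ⟨k, hk⟩ := hdvd
      have hk' : w = k * x := by rw [hk, mul_comm]
      have hk2 : 2 ≤ k := by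
        rcases Nat.lt_or_ge k 2 with h | h
        · interval_cases k <;> omega
        · exact h
      have hmem : x + (k - 2) * x ∈ T := haddmul x hxT (k - 2)
      have hsm : (k - 2) * x = k * x - 2 * x := Nat.sub_mul k 2 x
      have hge : 2 * x ≤ k * x := Nat.mul_le_mul_right x hk2
      obtain ⟨e, he⟩ : ∃ e, e = k * x := ⟨_, rfl⟩
      rw [← he] at hk' hsm hge
      have hSub : w - x = x + (k - 2) * x := by rw [hsm]; omega
      rw [hSub] at hab
      exact hab hmem
    have hrlt : r < x := Nat.mod_lt _ hxpos
    -- no minimal generator has residue r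
    have hnog : ∀ g ∈ minGens T, g % x ≠ r := by
      intro g hg hgr
      obtain ⟨hgT, hg0, hnsum⟩ := (hgen g).1 hg
      have hgx : g ≠ x := by
        intro h
        rw [h, Nat.mod_self] at hgr
        exact hr0 hgr.symm
      have hgB := hB g hg hgx
      rcases lt_trichotomy g w with h | h | h
      · exact hab (hA' g hgT w habT (by rw [hgr]) h)
      · exact hnsum ⟨a, ⟨haT, ha0⟩, b, ⟨hbT, hb0⟩, h⟩
      · exact hgB (hA' w habT g hgT (by rw [hgr]) h)
    have hfin : Finite ↥(minGens T) := Finite.of_injective φ hφinj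
    have : Fintype ↥(minGens T) := Fintype.ofFinite _
    have hnotmem : (⟨r, hrlt⟩ : Fin x) ∉ Set.range φ := by
      rintro ⟨g, hgeq⟩
      exact hnog g g.2 (congrArg Fin.val hgeq)
    have hlt : Fintype.card ↥(minGens T) < Fintype.card (Fin x) :=
      Fintype.card_lt_of_injective_of_notMem φ hφinj hnotmem
    rw [Fintype.card_fin] at hlt
    rw [Nat.card_eq_fintype_card] at hcard
    omega
  -- assemble
  constructor
  · rintro ⟨-, hArf, -⟩
    show Nat.card ↥(minGens T) = mult T
    rw [hmultT]
    exact hPcard (hArfP hArf)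
  · intro h
    rw [show embDim T = Nat.card ↥(minGens T) from rfl, hmultT] at h
    exact ⟨hnumT, hPArf (hcardP h), hfrobT⟩
end

section
/- Let S be a numerical semigroup and x a special gap of S with x < m(S). Then S ∪ {x} has maximal embedding dimension if and only if a + b − x ∈ S for every pair of minimal generators a, b of S. -/
/-- Counting the nonzero Apéry elements of a numerical semigroup `T` with multiplicity `x`. -/
lemma apery_card (T : Set ℕ) (x : ℕ) (hx : x ≠ 0) (hxT : x ∈ T) (h0 : 0 ∈ T)
    (hadd : ∀ a ∈ T, ∀ b ∈ T, a + b ∈ T) (hfin : Tᶜ.Finite)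
    (hge : ∀ t ∈ T, t ≠ 0 → x ≤ t) :
    Nat.card {w : ℕ | w ∈ T ∧ w ≠ 0 ∧ w - x ∉ T} = x - 1 ∧
      {w : ℕ | w ∈ T ∧ w ≠ 0 ∧ w - x ∉ T}.Finite := by
  have hxpos : 0 < x := Nat.pos_of_ne_zero hx
  set g : ℕ → ℕ := fun r => sInf {n | n ∈ T ∧ n % x = r} with hg
  have hmul : ∀ k, x * k ∈ T := by
    intro k
    induction k with
    | zero => simpa using h0
    | succ k ih => have := hadd _ ih _ hxT; simpa [Nat.mul_succ] using this
  have hstep : ∀ w ∈ T, ∀ k, w + x * k ∈ T := fun w hw k => hadd _ hw _ (hmul k)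
  have hbound : ∀ n, n ∉ T → n ≤ sSup Tᶜ := fun n hn => le_csSup hfin.bddAbove hn
  have hne : ∀ r, r < x → ({n | n ∈ T ∧ n % x = r}).Nonempty := by
    intro r hr
    refine ⟨r + x * (sSup Tᶜ + 1), ?_, ?_⟩
    · by_contra hmem
      have h1 := hbound _ hmem
      have h2 : sSup Tᶜ + 1 ≤ x * (sSup Tᶜ + 1) := Nat.le_mul_of_pos_left _ hxpos
      omega
    · simp [Nat.add_mul_mod_self_left, Nat.mod_eq_of_lt hr]
  have hgmem : ∀ r, r < x → g r ∈ T ∧ (g r) % x = r := fun r hr => Nat.sInf_mem (hne r hr)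
  have hA_eq : {w : ℕ | w ∈ T ∧ w ≠ 0 ∧ w - x ∉ T} = g '' Set.Ico 1 x := by
    ext w
    constructor
    · rintro ⟨hwT, hw0, hwx⟩
      have hwge : x ≤ w := hge w hwT hw0
      set r := w % x with hr
      have hrlt : r < x := Nat.mod_lt _ hxpos
      have hrne : r ≠ 0 := by
        intro h0r
        obtain ⟨k, hk⟩ := Nat.dvd_of_mod_eq_zero (hr ▸ h0r)
        rcases k with _ | k
        · simp at hk; exact hw0 hk
        · rw [Nat.mul_succ] at hk
          have hwk : w - x = x * k := by omega
          exact hwx (hwk ▸ hmul k)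
      refine ⟨r, ⟨by omega, hrlt⟩, ?_⟩
      have h1 : g r ≤ w := Nat.sInf_le ⟨hwT, rfl⟩
      rcases Nat.lt_or_ge (g r) w with hlt | hge'
      · exfalso
        obtain ⟨hgT, hgmod⟩ := hgmem r hrlt
        have hdvd : x ∣ (w - g r) := by
          refine (Nat.modEq_iff_dvd' (le_of_lt hlt)).mp ?_
          unfold Nat.ModEq
          rw [hgmod, ← hr]
        obtain ⟨k, hk⟩ := hdvd
        rcases k with _ | k
        · simp at hk; omega
        · rw [Nat.mul_succ] at hk
          have hwk : w - x = g r + x * k := by omega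
          exact hwx (hwk ▸ hstep _ hgT k)
      · omega
    · rintro ⟨r, ⟨hr1, hrx⟩, rfl⟩
      obtain ⟨hgT, hgmod⟩ := hgmem r hrx
      have hg0 : g r ≠ 0 := by
        intro h
        rw [h] at hgmod
        simp at hgmod
        omega
      have hggex : x ≤ g r := hge _ hgT hg0
      have hgnex : g r ≠ x := by
        intro h
        rw [h] at hgmod
        simp at hgmod
        omega
      refine ⟨hgT, hg0, ?_⟩
      intro hmem
      have hmod : (g r - x) % x = r := by
        have h := Nat.add_mod_right (g r - x) x
        rw [Nat.sub_add_cancel hggex] at h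
        omega
      have hle : g r ≤ g r - x := Nat.sInf_le ⟨hmem, hmod⟩
      omega
  have hinj : Set.InjOn g (Set.Ico 1 x) := by
    intro r hr r' hr' hgg
    have h1 := (hgmem r hr.2).2
    have h2 := (hgmem r' hr'.2).2
    rw [hgg] at h1
    omega
  constructor
  · rw [Nat.card_coe_set_eq, hA_eq, Set.ncard_image_of_injOn hinj,
      ← Finset.coe_Ico, Set.ncard_coe_finset, Nat.card_Ico]
  · rw [hA_eq]
    exact (Set.finite_Ico 1 x).image g

theorem adjoin_med_iff (S : Set ℕ) (x : ℕ) (hS : IsNumericalSemigroup S)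
    (hxS : x ∉ S) (h2x : 2 * x ∈ S) (hxs : ∀ s ∈ S, s ≠ 0 → x + s ∈ S) (hxm : x < mult S) :
    embDim (S ∪ {x}) = mult (S ∪ {x}) ↔
      ∀ a ∈ minGens S, ∀ b ∈ minGens S, a + b - x ∈ S := by
  obtain ⟨hS0, hSadd, hSfin⟩ := hS
  have hx0 : x ≠ 0 := fun h => hxS (h ▸ hS0)
  have hmultS : ∀ s ∈ S, s ≠ 0 → mult S ≤ s := fun s hs hs0 =>
    Nat.sInf_le ⟨hs, hs0⟩
  have hSge : ∀ s ∈ S, s ≠ 0 → x < s := fun s hs hs0 => lt_of_lt_of_le hxm (hmultS s hs hs0)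
  set T : Set ℕ := S ∪ {x} with hT
  have hxT : x ∈ T := Or.inr rfl
  have hT0 : 0 ∈ T := Or.inl hS0
  have hTadd : ∀ a ∈ T, ∀ b ∈ T, a + b ∈ T := by
    have key : ∀ a ∈ S, a + x ∈ T := by
      intro a ha
      rcases eq_or_ne a 0 with h | h
      · subst h; simpa using hxT
      · exact Or.inl (by rw [Nat.add_comm]; exact hxs a ha h)
    rintro a (ha | ha) b (hb | hb)
    · exact Or.inl (hSadd a ha b hb)
    · simp only [Set.mem_singleton_iff] at hb; subst hb; exact key a ha
    · simp only [Set.mem_singleton_iff] at ha; subst ha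
      rcases eq_or_ne b 0 with h | h
      · subst h; simpa using hxT
      · exact Or.inl (hxs b hb h)
    · simp only [Set.mem_singleton_iff] at ha hb; subst ha; subst hb
      exact Or.inl (by rwa [← two_mul])
  have hTge : ∀ t ∈ T, t ≠ 0 → x ≤ t := by
    rintro t (ht | ht) ht0
    · exact le_of_lt (hSge t ht ht0)
    · simp only [Set.mem_singleton_iff] at ht; omega
  have hTfin : Tᶜ.Finite := hSfin.subset (by
    intro n hn
    simp only [Set.mem_compl_iff, hT, Set.mem_union] at hn ⊢
    tauto)
  have hmultT : mult T = x := by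
    refine le_antisymm (Nat.sInf_le ⟨hxT, hx0⟩) ?_
    have hmem := Nat.sInf_mem (⟨x, hxT, hx0⟩ : (T \ {0}).Nonempty)
    exact hTge _ hmem.1 hmem.2
  set A : Set ℕ := {w : ℕ | w ∈ T ∧ w ≠ 0 ∧ w - x ∉ T} with hA
  obtain ⟨hcardA, hAfin⟩ := apery_card T x hx0 hxT hT0 hTadd hTfin hTge
  have hxA : x ∉ A := fun h => h.2.2 (by simpa using hT0)
  have hcardF : Nat.card (insert x A : Set ℕ) = x := by
    rw [Nat.card_coe_set_eq, Set.ncard_insert_of_notMem hxA hAfin,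
      ← Nat.card_coe_set_eq, hcardA]
    omega
  have hxgen : x ∈ minGens T := by
    refine ⟨⟨hxT, hx0⟩, ?_⟩
    rintro ⟨a, ⟨haT, ha0⟩, b, ⟨hbT, hb0⟩, hab⟩
    simp only [Set.mem_singleton_iff] at ha0 hb0
    have h1 := hTge a haT ha0
    have h2 := hTge b hbT hb0
    omega
  have hsubF : minGens T ⊆ insert x A := by
    rintro t ⟨⟨htT, ht0⟩, hns⟩
    simp only [Set.mem_singleton_iff] at ht0
    rcases eq_or_ne t x with h | h
    · exact Or.inl h
    · refine Or.inr ⟨htT, ht0, fun hmem => ?_⟩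
      have h1 : x ≤ t := hTge t htT ht0
      have h2 : t - x ≠ 0 := by omega
      exact hns ⟨x, ⟨hxT, hx0⟩, t - x, ⟨hmem, h2⟩, by omega⟩
  have hFfin : (insert x A : Set ℕ).Finite := hAfin.insert x
  rw [hmultT]
  constructor
  · -- MED implies a + b - x ∈ S for minimal generators
    intro hmed
    have hMG : minGens T = insert x A := by
      refine Set.eq_of_subset_of_ncard_le hsubF ?_ hFfin
      have h1 : (minGens T).ncard = x := by
        rw [← Nat.card_coe_set_eq]; exact hmed
      have h2 : (insert x A : Set ℕ).ncard = x := by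
        rw [← Nat.card_coe_set_eq]; exact hcardF
      omega
    intro a ha b hb
    obtain ⟨⟨haS, ha0⟩, -⟩ := ha
    obtain ⟨⟨hbS, hb0⟩, -⟩ := hb
    simp only [Set.mem_singleton_iff] at ha0 hb0
    have habT : a + b - x ∈ T := by
      by_contra hc
      have hmemA : a + b ∈ A := ⟨Or.inl (hSadd a haS b hbS), by
        have := hSge a haS ha0; omega, hc⟩
      have hgen : a + b ∈ minGens T := by rw [hMG]; exact Or.inr hmemA
      exact hgen.2 ⟨a, ⟨Or.inl haS, ha0⟩, b, ⟨Or.inl hbS, hb0⟩, rfl⟩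
    have h1 := hSge a haS ha0
    have h2 := hSge b hbS hb0
    rcases habT with h | h
    · exact h
    · simp only [Set.mem_singleton_iff] at h; omega
  · -- condition implies MED
    intro hcond
    -- first: the condition extends to all pairs of nonzero elements of S
    have hSS : ∀ n a b, a ∈ S → a ≠ 0 → b ∈ S → b ≠ 0 → a + b ≤ n → a + b - x ∈ S := by
      intro n
      induction n with
      | zero => intro a b _ ha0 _ _ h; omega
      | succ n ih =>
        intro a b haS ha0 hbS hb0 hn
        by_cases hda : ∃ a1 ∈ S \ {0}, ∃ a2 ∈ S \ {0}, a = a1 + a2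
        · obtain ⟨a1, ⟨ha1, ha1'⟩, a2, ⟨ha2, ha2'⟩, heq⟩ := hda
          simp only [Set.mem_singleton_iff] at ha1' ha2'
          have hc := ih a1 b ha1 ha1' hbS hb0 (by omega)
          have hx1 : x < a1 := hSge a1 ha1 ha1'
          have : a + b - x = a2 + (a1 + b - x) := by omega
          rw [this]
          exact hSadd a2 ha2 _ hc
        · by_cases hdb : ∃ b1 ∈ S \ {0}, ∃ b2 ∈ S \ {0}, b = b1 + b2
          · obtain ⟨b1, ⟨hb1, hb1'⟩, b2, ⟨hb2, hb2'⟩, heq⟩ := hdb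
            simp only [Set.mem_singleton_iff] at hb1' hb2'
            have hc := ih a b1 haS ha0 hb1 hb1' (by omega)
            have hx1 : x < a := hSge a haS ha0
            have : a + b - x = b2 + (a + b1 - x) := by omega
            rw [this]
            exact hSadd b2 hb2 _ hc
          · exact hcond a ⟨⟨haS, ha0⟩, hda⟩ b ⟨⟨hbS, hb0⟩, hdb⟩
    have hC : ∀ a ∈ T, a ≠ 0 → ∀ b ∈ T, b ≠ 0 → a + b - x ∈ T := by
      rintro a (ha | ha) ha0 b (hb | hb) hb0
      · exact Or.inl (hSS (a + b) a b ha ha0 hb hb0 le_rfl)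
      · simp only [Set.mem_singleton_iff] at hb
        have : a + b - x = a := by omega
        rw [this]; exact Or.inl ha
      · simp only [Set.mem_singleton_iff] at ha
        have : a + b - x = b := by omega
        rw [this]; exact Or.inl hb
      · simp only [Set.mem_singleton_iff] at ha hb
        have : a + b - x = x := by omega
        rw [this]; exact hxT
    have hAsub : A ⊆ minGens T := by
      rintro w ⟨hwT, hw0, hwx⟩
      refine ⟨⟨hwT, hw0⟩, ?_⟩
      rintro ⟨a, ⟨haT, ha0⟩, b, ⟨hbT, hb0⟩, hab⟩
      simp only [Set.mem_singleton_iff] at ha0 hb0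
      exact hwx (hab ▸ hC a haT ha0 b hbT hb0)
    have hMG : minGens T = insert x A :=
      subset_antisymm hsubF (Set.insert_subset hxgen hAsub)
    rw [embDim, hMG]
    exact hcardF
end

section
/- A numerical semigroup S has maximal embedding dimension if and only if its minimal generating set equals (Ap(S, m(S)) \ {0}) ∪ {m(S)}, where Ap(S, n) = {s ∈ S : s − n ∉ S} is the Apéry set. -/
/-- Apéry set of n in S. -/
def Ap (S : Set ℕ) (n : ℕ) : Set ℕ := {s ∈ S | ¬ ∃ t ∈ S, s = t + n}

theorem med_iff_apery (S : Set ℕ) (hS : IsNumericalSemigroup S) :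
    embDim S = mult S ↔ minGens S = (Ap S (mult S) \ {0}) ∪ {mult S} := by
  obtain ⟨h0, hadd, hfin⟩ := hS
  set m := mult S with hm
  have hSinf : S.Infinite := by
    have := hfin.infinite_compl
    rwa [compl_compl] at this
  have hne : (S \ {0}).Nonempty := (hSinf.diff (Set.finite_singleton 0)).nonempty
  have hmmem : m ∈ S \ {0} := Nat.sInf_mem hne
  have hmS : m ∈ S := hmmem.1
  have hmpos : 0 < m := Nat.pos_of_ne_zero (by simpa using hmmem.2)
  have hmul : ∀ t ∈ S, ∀ k, t + m * k ∈ S := by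
    intro t ht k
    induction k with
    | zero => simpa using ht
    | succ k ih =>
      have : t + m * (k + 1) = (t + m * k) + m := by ring
      rw [this]; exact hadd _ ih _ hmS
  -- injectivity of mod m on the Apery set
  have key : ∀ s ∈ Ap S m, ∀ s' ∈ Ap S m, s % m = s' % m → s ≤ s' → s = s' := by
    intro s hs s' hs' hmod hle
    by_contra hne'
    have hdvd : m ∣ s' - s := (Nat.modEq_iff_dvd' hle).mp hmod
    obtain ⟨k, hk⟩ := hdvd
    have hk0 : k ≠ 0 := by rintro rfl; omega
    obtain ⟨k', rfl⟩ := Nat.exists_eq_succ_of_ne_zero hk0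
    have hs'eq : s' = (s + m * k') + m := by
      have h2 : m * k'.succ = m * k' + m := Nat.mul_succ m k'
      omega
    exact hs'.2 ⟨s + m * k', hmul s hs.1 k', hs'eq⟩
  have hinj : Set.InjOn (· % m) (Ap S m) := by
    intro s hs s' hs' hmod
    rcases le_total s s' with h | h
    · exact key s hs s' hs' hmod h
    · exact (key s' hs' s hs hmod.symm h).symm
  -- surjectivity of mod m onto Iio m
  have hsurj : ∀ r < m, ∃ s ∈ Ap S m, s % m = r := by
    intro r hr
    set A : Set ℕ := {s | s ∈ S ∧ s % m = r} with hA
    have hAne : A.Nonempty := by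
      have hinf : {s : ℕ | s % m = r}.Infinite := by
        apply Set.infinite_of_injective_forall_mem
          (f := fun k : ℕ => r + m * k)
        · intro a b hab
          simp only at hab
          exact Nat.eq_of_mul_eq_mul_left hmpos (by omega)
        · intro k
          simp only [Set.mem_setOf_eq]
          rw [Nat.add_mul_mod_self_left, Nat.mod_eq_of_lt hr]
      have := (hinf.diff hfin).nonempty
      obtain ⟨x, hx1, hx2⟩ := this
      exact ⟨x, by simpa using hx2, hx1⟩
    set w := sInf A with hw
    have hwA : w ∈ A := Nat.sInf_mem hAne
    refine ⟨w, ⟨hwA.1, ?_⟩, hwA.2⟩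
    rintro ⟨t, htS, hteq⟩
    have htr : t % m = r := by
      have h2 := hwA.2
      rw [hteq, Nat.add_mod_right] at h2
      exact h2
    have := Nat.sInf_le (show t ∈ A from ⟨htS, htr⟩)
    omega
  have hbij : Set.BijOn (· % m) (Ap S m) (Set.Iio m) := by
    refine ⟨fun s hs => Nat.mod_lt s hmpos, hinj, ?_⟩
    intro r hr
    obtain ⟨s, hs, hsr⟩ := hsurj r hr
    exact ⟨s, hs, hsr⟩
  have hApFin : (Ap S m).Finite :=
    Set.Finite.of_finite_image (hbij.image_eq ▸ Set.finite_Iio m) hinj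
  have hApCard : (Ap S m).ncard = m := by
    have h1 : ((· % m) '' Ap S m).ncard = (Ap S m).ncard :=
      Set.ncard_image_of_injOn hinj
    rw [hbij.image_eq] at h1
    have h2 : (Set.Iio m).ncard = m := by
      rw [← Finset.coe_range, Set.ncard_coe_finset, Finset.card_range]
    omega
  have h0Ap : 0 ∈ Ap S m := by
    refine ⟨h0, ?_⟩
    rintro ⟨t, _, ht⟩
    omega
  have hmAp : m ∉ Ap S m := by
    intro h
    exact h.2 ⟨0, h0, by omega⟩
  -- the target set T
  set T : Set ℕ := (Ap S m \ {0}) ∪ {m} with hT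
  have hTfin : T.Finite := hApFin.diff.union (Set.finite_singleton m)
  have hTcard : T.ncard = m := by
    have hdisj : Disjoint (Ap S m \ {0}) {m} := by
      rw [Set.disjoint_singleton_right]
      intro h
      exact hmAp h.1
    rw [hT, Set.ncard_union_eq hdisj hApFin.diff (Set.finite_singleton m),
      Set.ncard_diff_singleton_of_mem h0Ap, hApCard, Set.ncard_singleton]
    omega
  have hsub : minGens S ⊆ T := by
    intro n hn
    obtain ⟨⟨hnS, hn0⟩, hnsum⟩ := hn
    simp only [Set.mem_singleton_iff] at hn0
    by_cases hnm : n = m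
    · exact Or.inr (by simp [hnm])
    · left
      refine ⟨⟨hnS, ?_⟩, by simpa using hn0⟩
      rintro ⟨t, htS, hteq⟩
      have ht0 : t ∉ ({0} : Set ℕ) := by
        simp only [Set.mem_singleton_iff]
        rintro rfl
        exact hnm (by omega)
      have hm0 : m ∉ ({0} : Set ℕ) := by
        simp only [Set.mem_singleton_iff]
        omega
      exact hnsum ⟨t, ⟨htS, ht0⟩, m, ⟨hmS, hm0⟩, hteq⟩
  have hMGfin : (minGens S).Finite := hTfin.subset hsub
  have hemb : embDim S = (minGens S).ncard := Nat.card_coe_set_eq _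
  constructor
  · intro h
    apply Set.eq_of_subset_of_ncard_le hsub _ hTfin
    rw [hTcard, ← hemb, h]
  · intro h
    rw [hemb, h, hTcard]
end

section
/- If S is a numerical semigroup, n a nonzero element of S, and x a special gap of S, then x + n ∈ Ap(S, n) and Ap(S ∪ {x}, n) = (Ap(S, n) \ {x + n}) ∪ {x}. -/
theorem apery_adjoin (S : Set ℕ) (n x : ℕ) (hS : IsNumericalSemigroup S)
    (hn : n ∈ S) (hn0 : n ≠ 0) (hxS : x ∉ S) (h2x : 2 * x ∈ S)
    (hxs : ∀ s ∈ S, s ≠ 0 → x + s ∈ S) :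
    x + n ∈ Ap S n ∧ Ap (S ∪ {x}) n = (Ap S n \ {x + n}) ∪ {x} := by
  obtain ⟨h0, hadd, hfin⟩ := hS
  have hxn : x + n ∈ S := hxs n hn hn0
  constructor
  · refine ⟨hxn, ?_⟩
    rintro ⟨t, ht, heq⟩
    have : t = x := by omega
    exact hxS (this ▸ ht)
  · ext y
    constructor
    · rintro ⟨hy, hny⟩
      rcases hy with hy | hy
      · left
        refine ⟨⟨hy, fun ⟨t, ht, heq⟩ => hny ⟨t, Or.inl ht, heq⟩⟩, ?_⟩
        intro h
        exact hny ⟨x, Or.inr rfl, h⟩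
      · right; exact hy
    · rintro (⟨⟨hy, hny⟩, hne⟩ | hy)
      · refine ⟨Or.inl hy, ?_⟩
        rintro ⟨t, (ht | ht), heq⟩
        · exact hny ⟨t, ht, heq⟩
        · exact hne (by simp only [Set.mem_singleton_iff] at ht ⊢; omega)
      · simp only [Set.mem_singleton_iff] at hy
        subst hy
        refine ⟨Or.inr rfl, ?_⟩
        rintro ⟨t, (ht | ht), heq⟩
        · exact hxS (heq ▸ hadd t ht n hn)
        · simp only [Set.mem_singleton_iff] at ht; omega
end

section
/- Let S be a numerical semigroup and x a special gap of S with x < m(S) such that S ∪ {x} has maximal embedding dimension. Then for every i ∈ {1, ..., x−1} there exists a minimal generator a of S with a ≡ i (mod x); moreover, if α(i) denotes the least such minimal generator, then the minimal generating set of S ∪ {x} is {x, α(1), ..., α(x−1)}. -/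
theorem adjoin_minGens (S : Set ℕ) (x : ℕ) (hS : IsNumericalSemigroup S)
    (hxS : x ∉ S) (h2x : 2 * x ∈ S) (hxs : ∀ s ∈ S, s ≠ 0 → x + s ∈ S) (hxm : x < mult S)
    (hMED : embDim (S ∪ {x}) = mult (S ∪ {x})) :
    (∀ i, 1 ≤ i → i < x → ∃ a ∈ minGens S, a % x = i) ∧
    minGens (S ∪ {x}) =
      {x} ∪ (fun i => sInf {a ∈ minGens S | a % x = i}) '' (Set.Ico 1 x) := by
  obtain ⟨h0S, haddS, hfinS⟩ := hS
  set T := S ∪ ({x} : Set ℕ) with hTdef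
  have hx0 : x ≠ 0 := fun h => hxS (h ▸ h0S)
  have hxpos : 0 < x := Nat.pos_of_ne_zero hx0
  have hxT : x ∈ T := Or.inr rfl
  have hST : S ⊆ T := Set.subset_union_left
  have hms : ∀ s ∈ S, s ≠ 0 → mult S ≤ s := fun s hs h0 => Nat.sInf_le ⟨hs, h0⟩
  have hTclosed : ∀ a ∈ T, ∀ b ∈ T, a + b ∈ T := by
    rintro a (ha | ha) b (hb | hb)
    · exact hST (haddS a ha b hb)
    · simp only [Set.mem_singleton_iff] at hb; subst hb
      rcases eq_or_ne a 0 with h | h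
      · simpa [h] using hxT
      · exact hST (by rw [add_comm]; exact hxs a ha h)
    · simp only [Set.mem_singleton_iff] at ha; subst ha
      rcases eq_or_ne b 0 with h | h
      · simpa [h] using hxT
      · exact hST (hxs b hb h)
    · simp only [Set.mem_singleton_iff] at ha hb; subst ha; subst hb
      exact hST (by rw [← two_mul]; exact h2x)
  have hTge : ∀ t ∈ T, t ≠ 0 → x ≤ t := by
    rintro t (ht | ht) h0
    · exact le_trans (le_of_lt hxm) (hms t ht h0)
    · simp only [Set.mem_singleton_iff] at ht; omega
  have hmultT : mult T = x := by
    refine le_antisymm (Nat.sInf_le ⟨hxT, hx0⟩) ?_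
    exact le_csInf ⟨x, hxT, hx0⟩ (fun t ht => hTge t ht.1 ht.2)
  have hmul : ∀ k, k ≠ 0 → x * k ∈ T := by
    intro k hk
    induction k with
    | zero => exact absurd rfl hk
    | succ n ih =>
      rcases eq_or_ne n 0 with h | h
      · simpa [h] using hxT
      · have := hTclosed _ (ih h) x hxT
        simpa [mul_add] using this
  obtain ⟨N, hN⟩ := hfinS.bddAbove
  have hlarge : ∀ n, N < n → n ∈ S := by
    intro n hn; by_contra h; exact absurd (hN h) (not_le.mpr hn)
  set w : ℕ → ℕ := fun i => sInf {s ∈ S | s % x = i} with hwdef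
  have hWne : ∀ i, i < x → ({s ∈ S | s % x = i} : Set ℕ).Nonempty := by
    intro i hi
    refine ⟨i + x * (N + 1), hlarge _ ?_, ?_⟩
    · have : N + 1 ≤ x * (N + 1) := Nat.le_mul_of_pos_left _ hxpos
      omega
    · simp [Nat.add_mul_mod_self_left, Nat.mod_eq_of_lt hi]
  have hwmem : ∀ i, i < x → w i ∈ S ∧ w i % x = i := fun i hi => Nat.sInf_mem (hWne i hi)
  -- minimal generators of T are contained in A
  have hsub : minGens T ⊆ {x} ∪ w '' Set.Ico 1 x := by
    rintro t ⟨⟨htT, ht0⟩, htmin⟩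
    simp only [Set.mem_singleton_iff] at ht0
    rcases eq_or_ne (t % x) 0 with hi | hi
    · left
      have hdvd : x ∣ t := Nat.dvd_of_mod_eq_zero hi
      obtain ⟨k, hk⟩ := hdvd
      have hk1 : k ≠ 0 := by rintro rfl; simp at hk; exact ht0 hk
      rcases eq_or_ne k 1 with h1 | h1
      · simp [hk, h1]
      · exfalso
        apply htmin
        obtain ⟨m, rfl⟩ : ∃ m, k = m + 2 := ⟨k - 2, by omega⟩
        refine ⟨x, ⟨hxT, hx0⟩, x * (m + 1), ⟨hmul (m + 1) (by omega), ?_⟩, ?_⟩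
        · simp only [Set.mem_singleton_iff]
          exact Nat.mul_ne_zero hx0 (by omega)
        · rw [hk]; ring
    · right
      have hi1 : 1 ≤ t % x := Nat.pos_of_ne_zero hi
      have hilt : t % x < x := Nat.mod_lt _ hxpos
      have htS : t ∈ S := by
        rcases htT with h | h
        · exact h
        · exfalso
          simp only [Set.mem_singleton_iff] at h
          rw [h] at hi
          exact hi (Nat.mod_self x)
      have hle : w (t % x) ≤ t := Nat.sInf_le ⟨htS, rfl⟩
      rcases eq_or_lt_of_le hle with heq | hlt
      · exact ⟨t % x, ⟨hi1, hilt⟩, heq⟩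
      · exfalso
        obtain ⟨hwS, hwmod⟩ := hwmem (t % x) hilt
        have hw0 : w (t % x) ≠ 0 := by
          intro h; rw [h] at hwmod; simp at hwmod; omega
        have hModEq : w (t % x) ≡ t [MOD x] := hwmod
        have hdvd : x ∣ t - w (t % x) := (Nat.modEq_iff_dvd' (le_of_lt hlt)).mp hModEq
        obtain ⟨k, hk⟩ := hdvd
        have hk0 : k ≠ 0 := by rintro rfl; omega
        apply htmin
        exact ⟨w (t % x), ⟨hST hwS, hw0⟩, x * k, ⟨hmul k hk0, by
          simp only [Set.mem_singleton_iff]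
          exact Nat.mul_ne_zero hx0 hk0⟩, by omega⟩
  have hAfin : ({x} ∪ w '' Set.Ico 1 x : Set ℕ).Finite :=
    (Set.finite_singleton x).union ((Set.finite_Ico 1 x).image w)
  have hAcard : ({x} ∪ w '' Set.Ico 1 x : Set ℕ).ncard ≤ x := by
    have h1 : ({x} ∪ w '' Set.Ico 1 x : Set ℕ)
        ⊆ (fun i => if i = 0 then x else w i) '' Set.Ico 0 x := by
      rintro t (ht | ⟨i, hi, rfl⟩)
      · simp only [Set.mem_singleton_iff] at ht
        exact ⟨0, ⟨le_refl 0, hxpos⟩, by simp [ht]⟩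
      · refine ⟨i, ⟨Nat.zero_le i, hi.2⟩, ?_⟩
        have : i ≠ 0 := by have := hi.1; omega
        simp [this]
    calc ({x} ∪ w '' Set.Ico 1 x : Set ℕ).ncard
        ≤ ((fun i => if i = 0 then x else w i) '' Set.Ico 0 x).ncard :=
          Set.ncard_le_ncard h1 ((Set.finite_Ico 0 x).image _)
      _ ≤ (Set.Ico 0 x).ncard := Set.ncard_image_le (Set.finite_Ico 0 x)
      _ = x := by rw [Set.ncard_eq_toFinset_card']; simp
  have hcardT : (minGens T).ncard = x := by
    rw [← Nat.card_coe_set_eq]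
    rw [hmultT] at hMED
    exact hMED
  have hEq : minGens T = {x} ∪ w '' Set.Ico 1 x :=
    Set.eq_of_subset_of_ncard_le hsub (by rw [hcardT]; exact hAcard) hAfin
  have hwMinS : ∀ i ∈ Set.Ico 1 x, w i ∈ minGens S := by
    intro i hi
    have hmemT : w i ∈ minGens T := by
      rw [hEq]; exact Or.inr ⟨i, hi, rfl⟩
    obtain ⟨⟨hT', h0'⟩, hmin'⟩ := hmemT
    refine ⟨⟨(hwmem i hi.2).1, h0'⟩, ?_⟩
    rintro ⟨a, ⟨haS, ha0⟩, b, ⟨hbS, hb0⟩, habe⟩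
    exact hmin' ⟨a, ⟨hST haS, ha0⟩, b, ⟨hST hbS, hb0⟩, habe⟩
  have halpha : ∀ i ∈ Set.Ico 1 x, sInf {a ∈ minGens S | a % x = i} = w i := by
    intro i hi
    have hm : w i ∈ {a ∈ minGens S | a % x = i} := ⟨hwMinS i hi, (hwmem i hi.2).2⟩
    refine le_antisymm (Nat.sInf_le hm) ?_
    have hmem2 := Nat.sInf_mem (⟨w i, hm⟩ : ({a ∈ minGens S | a % x = i} : Set ℕ).Nonempty)
    exact Nat.sInf_le ⟨hmem2.1.1.1, hmem2.2⟩
  constructor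
  · intro i h1 h2
    exact ⟨w i, hwMinS i ⟨h1, h2⟩, (hwmem i h2).2⟩
  · rw [hEq]
    congr 1
    exact (Set.image_congr (fun i hi => halpha i hi)).symm
end

section
/- Let S be a proper nonempty subset of ℕ with finite complement. Then S is an Arf numerical semigroup if and only if there exists an Arf sequence (x₁, ..., x_n) such that S = {0, x_n, x_n + x_{n-1}, ..., x_n + x_{n-1} + ⋯ + x₁} ∪ {m ∈ ℕ : m ≥ x_n + ⋯ + x₁}. -/
/-- Arf sequence (x 1, ..., x n). -/
def IsArfSeq (n : ℕ) (x : ℕ → ℕ) : Prop :=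
  1 ≤ n ∧ 2 ≤ x 1 ∧ (∀ i j, 1 ≤ i → i ≤ j → j ≤ n → x i ≤ x j) ∧
  ∀ i, 1 ≤ i → i < n →
    (∃ k, 1 ≤ k ∧ k ≤ i ∧ x (i + 1) = ∑ j ∈ Finset.Icc k i, x j) ∨
    (∑ j ∈ Finset.Icc 1 i, x j) < x (i + 1)

namespace ArfAuxProof

/-- The set built from a sequence. -/
def SSet (n : ℕ) (x : ℕ → ℕ) : Set ℕ :=
  {0} ∪ {s | ∃ k, 1 ≤ k ∧ k ≤ n ∧ s = ∑ j ∈ Finset.Icc k n, x j} ∪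
    {m | ∑ j ∈ Finset.Icc 1 n, x j ≤ m}

lemma zero_mem (n : ℕ) (x : ℕ → ℕ) : 0 ∈ SSet n x :=
  Or.inl (Or.inl rfl)

lemma tail_mem (n : ℕ) (x : ℕ → ℕ) {m : ℕ} (h : ∑ j ∈ Finset.Icc 1 n, x j ≤ m) :
    m ∈ SSet n x := Or.inr h

lemma psum_mem (n : ℕ) (x : ℕ → ℕ) {k : ℕ} (h1 : 1 ≤ k) (h2 : k ≤ n) :
    (∑ j ∈ Finset.Icc k n, x j) ∈ SSet n x := Or.inl (Or.inr ⟨k, h1, h2, rfl⟩)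

lemma shift (n : ℕ) (x : ℕ → ℕ) {s : ℕ} (hs : s ∈ SSet n x) :
    s + x (n + 1) ∈ SSet (n + 1) x := by
  rcases hs with (h0 | ⟨k, hk1, hkn, rfl⟩) | htail
  · rw [Set.mem_singleton_iff] at h0
    subst h0
    refine Or.inl (Or.inr ⟨n + 1, by omega, le_refl _, ?_⟩)
    rw [Finset.Icc_self, Finset.sum_singleton, zero_add]
  · refine Or.inl (Or.inr ⟨k, hk1, by omega, ?_⟩)
    rw [Finset.sum_Icc_succ_top (by omega)]
  · refine Or.inr ?_
    have : (∑ j ∈ Finset.Icc 1 (n + 1), x j)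
        = (∑ j ∈ Finset.Icc 1 n, x j) + x (n + 1) :=
      Finset.sum_Icc_succ_top (by omega) x
    simp only [Set.mem_setOf_eq] at htail ⊢
    omega

lemma down (n : ℕ) (x : ℕ → ℕ) {s : ℕ} (hs : s ∈ SSet (n + 1) x) :
    s = 0 ∨ (x (n + 1) ≤ s ∧ s - x (n + 1) ∈ SSet n x) := by
  rcases hs with (h0 | ⟨k, hk1, hkn, rfl⟩) | htail
  · exact Or.inl h0
  · right
    rcases eq_or_lt_of_le hkn with heq | hlt
    · subst heq
      rw [Finset.Icc_self, Finset.sum_singleton]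
      exact ⟨le_refl _, by simpa using zero_mem n x⟩
    · have h : (∑ j ∈ Finset.Icc k (n + 1), x j)
          = (∑ j ∈ Finset.Icc k n, x j) + x (n + 1) :=
        Finset.sum_Icc_succ_top (by omega) x
      rw [h]
      exact ⟨by omega, by simpa using psum_mem n x hk1 (by omega)⟩
  · right
    have h : (∑ j ∈ Finset.Icc 1 (n + 1), x j)
        = (∑ j ∈ Finset.Icc 1 n, x j) + x (n + 1) :=
      Finset.sum_Icc_succ_top (by omega) x
    simp only [Set.mem_setOf_eq] at htail
    rw [h] at htail
    exact ⟨by omega, Or.inr (by simp only [Set.mem_setOf_eq]; omega)⟩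

lemma key (n : ℕ) (x : ℕ → ℕ)
    (hc : ∀ i, 1 ≤ i → i < n →
      (∃ k, 1 ≤ k ∧ k ≤ i ∧ x (i + 1) = ∑ j ∈ Finset.Icc k i, x j) ∨
      (∑ j ∈ Finset.Icc 1 i, x j) < x (i + 1)) :
    ∀ a ∈ SSet n x, ∀ b ∈ SSet n x, ∀ c ∈ SSet n x,
      c ≤ a → c ≤ b → a + b - c ∈ SSet n x := by
  induction n with
  | zero =>
    intro a _ b _ c _ _ _
    exact Or.inr (by simp)
  | succ n ih =>
    have ih' := ih (fun i h1 h2 => hc i h1 (by omega))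
    have hx : x (n + 1) ∈ SSet n x := by
      rcases Nat.eq_zero_or_pos n with h | h
      · subst h
        exact Or.inr (by simp)
      · rcases hc n h (by omega) with ⟨k, hk1, hkn, he⟩ | hlt
        · exact he ▸ psum_mem n x hk1 hkn
        · exact Or.inr (le_of_lt hlt)
    intro a ha b hb c hcm hca hcb
    rcases down n x ha with rfl | ⟨hxa, ha'⟩
    · have hc0 : c = 0 := by omega
      subst hc0
      simpa using hb
    rcases down n x hb with rfl | ⟨hxb, hb'⟩
    · have hc0 : c = 0 := by omega
      subst hc0
      simpa using ha
    rcases down n x hcm with rfl | ⟨hxc, hc'⟩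
    · -- c = 0: show a + b ∈ SSet (n+1) x
      have h1 : (a - x (n + 1)) + (b - x (n + 1)) - 0 ∈ SSet n x :=
        ih' _ ha' _ hb' 0 (zero_mem n x) (Nat.zero_le _) (Nat.zero_le _)
      rw [Nat.sub_zero] at h1
      have h2 : ((a - x (n + 1)) + (b - x (n + 1))) + x (n + 1) - 0 ∈ SSet n x :=
        ih' _ h1 _ hx 0 (zero_mem n x) (Nat.zero_le _) (Nat.zero_le _)
      rw [Nat.sub_zero] at h2
      have h3 := shift n x h2
      have heq : a + b - 0 = ((a - x (n + 1)) + (b - x (n + 1)) + x (n + 1)) + x (n + 1) := by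
        omega
      rw [heq]
      exact h3
    · have h1 : (a - x (n + 1)) + (b - x (n + 1)) - (c - x (n + 1)) ∈ SSet n x :=
        ih' _ ha' _ hb' _ hc' (by omega) (by omega)
      have h2 := shift n x h1
      have heq : a + b - c
          = ((a - x (n + 1)) + (b - x (n + 1)) - (c - x (n + 1))) + x (n + 1) := by
        omega
      rw [heq]
      exact h2

end ArfAuxProof

theorem arf_iff_arfSeq (S : Set ℕ) (hne : S.Nonempty) (hSp : S ≠ Set.univ) :
    (IsNumericalSemigroup S ∧ IsArf S) ↔
      ∃ n : ℕ, ∃ x : ℕ → ℕ, IsArfSeq n x ∧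
        S = {0} ∪ {s | ∃ k, 1 ≤ k ∧ k ≤ n ∧ s = ∑ j ∈ Finset.Icc k n, x j} ∪
          {m | ∑ j ∈ Finset.Icc 1 n, x j ≤ m} := by
  constructor
  · rintro ⟨⟨h0, hadd, hfin⟩, harf⟩
    classical
    have hcne : Sᶜ.Nonempty := Set.nonempty_compl.mpr hSp
    have hinf : S.Infinite := by
      have := hfin.infinite_compl
      rwa [compl_compl] at this
    set p : ℕ → Prop := fun m => m ∈ S with hp
    have hpinf : (setOf p).Infinite := hinf
    have hF : sSup Sᶜ ∉ S := hcne.csSup_mem hfin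
    set F := sSup Sᶜ with hFdef
    have hgt : ∀ m, F < m → m ∈ S := by
      intro m hm
      by_contra h
      exact absurd (le_csSup hfin.bddAbove h) (not_le.mpr hm)
    have hcS : F + 1 ∈ S := hgt _ (Nat.lt_succ_self F)
    set t : ℕ → ℕ := Nat.nth p with htdef
    have htmono : StrictMono t := Nat.nth_strictMono hpinf
    have htmem : ∀ i, t i ∈ S := fun i => Nat.nth_mem_of_infinite hpinf i
    have ht0 : t 0 = 0 := by
      rw [htdef, Nat.nth_zero]
      exact Nat.sInf_eq_zero.mpr (Or.inl h0)
    set n := Nat.count p (F + 1) with hndef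
    have htn : t n = F + 1 := Nat.nth_count hcS
    have hn1 : 1 ≤ n := by
      by_contra h
      have hn0 : n = 0 := by omega
      rw [hn0, ht0] at htn; omega
    have hidx : ∀ s, s ∈ S → ∃ j, t j = s := fun s hs => ⟨Nat.count p s, Nat.nth_count hs⟩
    have hidx' : ∀ s, s ∈ S → s ≤ F + 1 → ∃ j, j ≤ n ∧ t j = s := by
      intro s hs hsc
      exact ⟨Nat.count p s, Nat.count_monotone p hsc, Nat.nth_count hs⟩
    have hstep : ∀ m s, s ∈ S → t m < s → t (m + 1) ≤ s := by
      intro m s hs hlt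
      obtain ⟨j, hj⟩ := hidx s hs
      have hmj : m < j := htmono.lt_iff_lt.mp (by omega)
      calc t (m + 1) ≤ t j := htmono.monotone (by omega)
        _ = s := hj
    set x : ℕ → ℕ := fun i => t (n - i + 1) - t (n - i) with hxdef
    have hxval : ∀ i, x i = t (n - i + 1) - t (n - i) := fun i => rfl
    have tele0 : ∀ m, m ≤ n → ∑ j ∈ Finset.Icc (n - m + 1) n, x j = t m := by
      intro m
      induction m with
      | zero =>
        intro _
        rw [Nat.sub_zero, Finset.Icc_eq_empty (by omega), Finset.sum_empty, ht0]
      | succ m ihm =>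
        intro hm
        have h1 : n - (m + 1) + 1 = n - m := by omega
        have h2 : Finset.Icc (n - m) n = insert (n - m) (Finset.Icc (n - m + 1) n) := by
          ext a; simp only [Finset.mem_Icc, Finset.mem_insert]; omega
        rw [h1, h2, Finset.sum_insert (by simp only [Finset.mem_Icc]; omega),
          ihm (by omega)]
        have hxv : x (n - m) = t (m + 1) - t m := by
          rw [hxval, show n - (n - m) = m from by omega]
        have hle : t m ≤ t (m + 1) := (htmono (Nat.lt_succ_self m)).le
        rw [hxv]; omega
    have tele : ∀ k, 1 ≤ k → k ≤ n → ∑ j ∈ Finset.Icc k n, x j = t (n - k + 1) := by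
      intro k hk1 hkn
      have h := tele0 (n - k + 1) (by omega)
      rwa [show n - (n - k + 1) + 1 = k by omega] at h
    have total : ∑ j ∈ Finset.Icc 1 n, x j = F + 1 := by
      rw [tele 1 le_rfl hn1, show n - 1 + 1 = n by omega, htn]
    have telepart : ∀ k i, 1 ≤ k → k ≤ i → i ≤ n →
        (∑ j ∈ Finset.Icc k i, x j) + t (n - i) = t (n - k + 1) := by
      intro k i hk1 hki hin
      have hsplit : (∑ j ∈ Finset.Icc k i, x j) + (∑ j ∈ Finset.Icc (i + 1) n, x j)
          = ∑ j ∈ Finset.Icc k n, x j := by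
        rw [← Finset.Ico_add_one_right_eq_Icc k i, ← Finset.Ico_add_one_right_eq_Icc (i + 1) n,
          ← Finset.Ico_add_one_right_eq_Icc k n]
        exact Finset.sum_Ico_consecutive x (by omega) (by omega)
      have htail : (∑ j ∈ Finset.Icc (i + 1) n, x j) = t (n - i) := by
        by_cases hin' : i = n
        · rw [hin', Finset.Icc_eq_empty (by omega), Finset.sum_empty, Nat.sub_self, ht0]
        · rw [tele (i + 1) (by omega) (by omega)]
          congr 2; omega
      rw [htail] at hsplit
      rw [hsplit, tele k hk1 (by omega)]
    have gapmono : ∀ m, 1 ≤ m → m < n → t (m + 1) - t m ≤ t m - t (m - 1) := by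
      intro m hm1 hmn
      have hle : t (m - 1) ≤ t m := htmono.monotone (by omega)
      have hy : t m + t m - t (m - 1) ∈ S :=
        harf _ (htmem m) _ (htmem m) _ (htmem (m - 1)) hle le_rfl
      have hlt : t (m - 1) < t m := htmono (by omega)
      have h2 := hstep m _ hy (by omega)
      omega
    have dmono : ∀ b, b < n → ∀ a, a ≤ b → t (b + 1) - t b ≤ t (a + 1) - t a := by
      intro b
      induction b with
      | zero => intro _ a ha; rw [Nat.le_zero.mp ha]
      | succ b ihb =>
        intro hb a ha
        rcases Nat.lt_or_ge a (b + 1) with h | h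
        · have hstep' : t (b + 2) - t (b + 1) ≤ t (b + 1) - t b := by
            have hg := gapmono (b + 1) (by omega) hb
            simpa using hg
          exact le_trans hstep' (ihb (by omega) a (by omega))
        · have hab : a = b + 1 := by omega
          rw [hab]
    have hxmono : ∀ i j, 1 ≤ i → i ≤ j → j ≤ n → x i ≤ x j := by
      intro i j hi hij hjn
      exact dmono (n - i) (by omega) (n - j) (by omega)
    have hx1 : 2 ≤ x 1 := by
      have hlt : t (n - 1) < t n := htmono (by omega)
      have hne' : t (n - 1) ≠ F := fun h => hF (h ▸ htmem (n - 1))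
      have hxv : x 1 = t n - t (n - 1) := by
        rw [hxval, show n - 1 + 1 = n by omega]
      rw [hxv]; omega
    have hcond : ∀ i, 1 ≤ i → i < n →
        (∃ k, 1 ≤ k ∧ k ≤ i ∧ x (i + 1) = ∑ j ∈ Finset.Icc k i, x j) ∨
        (∑ j ∈ Finset.Icc 1 i, x j) < x (i + 1) := by
      intro i hi1 hin
      have hxi : x (i + 1) = t (n - i) - t (n - i - 1) := by
        rw [hxval, show n - (i + 1) + 1 = n - i from by omega,
          show n - (i + 1) = n - i - 1 from by omega]
      have hlow : t (n - i - 1) < t (n - i) := htmono (by omega)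
      have hy : t (n - i) + t (n - i) - t (n - i - 1) ∈ S :=
        harf _ (htmem _) _ (htmem _) _ (htmem _) hlow.le le_rfl
      set y := t (n - i) + t (n - i) - t (n - i - 1) with hydef
      have hygt : t (n - i) < y := by omega
      rcases le_or_gt y (F + 1) with hyc | hyc
      · left
        obtain ⟨j, hjn, hj⟩ := hidx' y hy hyc
        have hji : n - i < j := htmono.lt_iff_lt.mp (by omega)
        refine ⟨n - j + 1, by omega, by omega, ?_⟩
        have hp' := telepart (n - j + 1) i (by omega) (by omega) (by omega)
        rw [show n - (n - j + 1) + 1 = j by omega] at hp'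
        omega
      · right
        have hp' := telepart 1 i (by omega) (by omega) (by omega)
        rw [show n - 1 + 1 = n by omega, htn] at hp'
        omega
    refine ⟨n, x, ⟨hn1, hx1, hxmono, hcond⟩, ?_⟩
    ext s
    constructor
    · intro hs
      rcases le_or_gt (F + 1) s with h | h
      · exact Or.inr (show (∑ j ∈ Finset.Icc 1 n, x j) ≤ s by omega)
      · obtain ⟨j, hjn, hj⟩ := hidx' s hs (by omega)
        rcases Nat.eq_zero_or_pos j with rfl | hj1
        · rw [ht0] at hj
          exact Or.inl (Or.inl (show s = 0 by omega))
        · refine Or.inl (Or.inr ⟨n - j + 1, by omega, by omega, ?_⟩)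
          rw [tele (n - j + 1) (by omega) (by omega),
            show n - (n - j + 1) + 1 = j by omega, hj]
    · intro hs
      rcases hs with (hz | ⟨k, hk1, hkn, rfl⟩) | htail
      · rw [Set.mem_singleton_iff] at hz
        rw [hz]; exact h0
      · rw [tele k hk1 hkn]; exact htmem _
      · simp only [Set.mem_setOf_eq] at htail
        exact hgt s (by omega)
  · rintro ⟨n, x, ⟨hn1, hx1, hxmono, hcond⟩, hS⟩
    have hkey := ArfAuxProof.key n x hcond
    have hSeq : S = ArfAuxProof.SSet n x := hS
    constructor
    · refine ⟨?_, ?_, ?_⟩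
      · rw [hSeq]; exact ArfAuxProof.zero_mem n x
      · intro a ha b hb
        rw [hSeq] at ha hb ⊢
        have := hkey a ha b hb 0 (ArfAuxProof.zero_mem n x) (Nat.zero_le _) (Nat.zero_le _)
        rwa [Nat.sub_zero] at this
      · apply Set.Finite.subset (Set.finite_Iio (∑ j ∈ Finset.Icc 1 n, x j))
        intro m hm
        simp only [Set.mem_Iio]
        by_contra h
        exact hm (hSeq ▸ ArfAuxProof.tail_mem n x (by omega))
    · intro a ha b hb c hcm hcb hba
      rw [hSeq] at ha hb hcm ⊢
      exact hkey a ha b hb c hcm (le_trans hcb hba) hcb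
end

section
/- If S and T are Arf numerical semigroups with the same Frobenius number F, S ⊊ T, and x = max(T \ S), then S ∪ {x} is an Arf numerical semigroup with Frobenius number F. -/
theorem adjoin_max_diff (S T : Set ℕ) (F x : ℕ)
    (hS : IsNumericalSemigroup S) (hSA : IsArf S) (hSF : Frob S = F)
    (hT : IsNumericalSemigroup T) (hTA : IsArf T) (hTF : Frob T = F)
    (hST : S ⊂ T) (hx : IsGreatest (T \ S) x) :
    IsNumericalSemigroup (S ∪ {x}) ∧ IsArf (S ∪ {x}) ∧ Frob (S ∪ {x}) = F := by
  obtain ⟨hS0, hSadd, hSfin⟩ := hS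
  obtain ⟨hT0, hTadd, hTfin⟩ := hT
  obtain ⟨⟨hxT, hxS⟩, hxmax⟩ := hx
  have hSF' : sSup Sᶜ = F := hSF
  have hTF' : sSup Tᶜ = F := hTF
  have hSsubT : S ⊆ T := hST.subset
  have hx0 : x ≠ 0 := fun h => hxS (h ▸ hS0)
  have hFS : F ∉ S := by
    have := Nat.sSup_mem ⟨x, hxS⟩ hSfin.bddAbove
    rwa [hSF'] at this
  have hxF : x ≤ F := by
    have := le_csSup hSfin.bddAbove (hxS : x ∈ Sᶜ)
    rwa [hSF'] at this
  have hTcne : Tᶜ.Nonempty := by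
    by_contra h
    rw [Set.not_nonempty_iff_eq_empty] at h
    rw [h] at hTF'
    simp at hTF'
    rw [← hTF'] at hFS
    exact hFS hS0
  have hFT : F ∉ T := by
    have := Nat.sSup_mem hTcne hTfin.bddAbove
    rwa [hTF'] at this
  have hxltF : x < F := lt_of_le_of_ne hxF (fun h => hFT (h ▸ hxT))
  have key : ∀ t ∈ T, x < t → t ∈ S := by
    intro t ht hlt
    by_contra hts
    exact absurd (hxmax ⟨ht, hts⟩) (not_le.mpr hlt)
  refine ⟨⟨Or.inl hS0, ?_, ?_⟩, ?_, ?_⟩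
  · -- additive closure
    rintro a (ha | rfl) b (hb | rfl)
    · exact Or.inl (hSadd a ha b hb)
    · -- b is the old x
      rcases Nat.eq_zero_or_pos a with rfl | hpos
      · exact Or.inr (by simp)
      · exact Or.inl (key _ (hTadd a (hSsubT ha) b hxT) (by omega))
    · -- a is the old x
      rcases Nat.eq_zero_or_pos b with rfl | hpos
      · exact Or.inr (by simp)
      · exact Or.inl (key _ (hTadd a hxT b (hSsubT hb)) (by omega))
    · -- b is the old x (after double subst)
      exact Or.inl (key _ (hTadd b hxT b hxT) (by omega))
  · -- finite complement
    exact hSfin.subset (Set.compl_subset_compl.mpr Set.subset_union_left)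
  · -- Arf
    rintro a (ha | rfl) b (hb | rfl) c (hc | rfl) hcb hba
    · exact Or.inl (hSA a ha b hb c hc hcb hba)
    · -- c is old x; a b ∈ S
      have hbne : b ≠ c := fun h => hxS (h ▸ hb)
      exact Or.inl (key _ (hTA a (hSsubT ha) b (hSsubT hb) c hxT hcb hba) (by omega))
    · -- b is old x; a c ∈ S
      have hane : a ≠ b := fun h => hxS (h ▸ ha)
      have hcne : c ≠ b := fun h => hxS (h ▸ hc)
      exact Or.inl (key _ (hTA a (hSsubT ha) b hxT c (hSsubT hc) hcb hba) (by omega))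
    · -- b = c = old x, final name c; a ∈ S
      have h1 : a + c - c = a := by omega
      rw [h1]; exact Or.inl ha
    · -- a is old x; b c ∈ S
      rcases eq_or_lt_of_le hcb with rfl | hlt
      · have h1 : a + c - c = a := by omega
        rw [h1]; exact Or.inr rfl
      · exact Or.inl (key _ (hTA a hxT b (hSsubT hb) c (hSsubT hc) hcb hba) (by omega))
    · -- a and c are old x, final name c; b ∈ S
      exact absurd ((le_antisymm hba hcb) ▸ hb) hxS
    · -- a b are old x, final name b; c ∈ S
      have hcne : c ≠ b := fun h => hxS (h ▸ hc)
      exact Or.inl (key _ (hTA b hxT b hxT c (hSsubT hc) hcb hba) (by omega))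
    · -- all three old x, final name c
      have h1 : c + c - c = c := by omega
      rw [h1]; exact Or.inr rfl
  · -- Frobenius
    have hcompl : (S ∪ {x})ᶜ = Sᶜ \ {x} := by
      rw [Set.compl_union, ← Set.diff_eq]
    have hFmem : F ∈ Sᶜ \ {x} := ⟨hFS, by simp; omega⟩
    have hbdd : BddAbove (Sᶜ \ {x}) := (hSfin.subset Set.diff_subset).bddAbove
    show sSup (S ∪ {x})ᶜ = F
    rw [hcompl]
    apply le_antisymm
    · refine csSup_le ⟨F, hFmem⟩ (fun n hn => ?_)
      rw [← hSF']; exact le_csSup hSfin.bddAbove hn.1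
    · exact le_csSup hbdd hFmem
end

section
/- Let (x₁, ..., x_n) be an Arf sequence and a an integer with a ≥ 2. Then (a, x₁ − a, x₂, ..., x_n) is an Arf sequence if and only if a ≤ x₁/2. -/
lemma sum_shift (x : ℕ → ℕ) (k i : ℕ) :
    ∑ j ∈ Finset.Icc (k + 1) (i + 1), x (j - 1) = ∑ j ∈ Finset.Icc k i, x j := by
  rw [← Finset.map_add_right_Icc, Finset.sum_map]
  simp

theorem arfSeq_prepend (n : ℕ) (x : ℕ → ℕ) (a : ℕ) (hx : IsArfSeq n x) (ha : 2 ≤ a) :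
    IsArfSeq (n + 1)
      (fun i => if i = 1 then a else if i = 2 then x 1 - a else x (i - 1)) ↔
    2 * a ≤ x 1 := by
  obtain ⟨hn, hx1, hmono, harf⟩ := hx
  set y : ℕ → ℕ := fun i => if i = 1 then a else if i = 2 then x 1 - a else x (i - 1) with hy
  constructor
  · rintro ⟨-, -, hmono', -⟩
    have h12 := hmono' 1 2 le_rfl (by omega) (by omega)
    simp only [hy] at h12
    norm_num at h12
    omega
  · intro h2a
    have hax : a ≤ x 1 := by omega
    refine ⟨by omega, by simpa [hy] using ha, ?_, ?_⟩
    · intro i j hi hij hj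
      simp only [hy]
      split_ifs with h1 h2 h3 h4 h5 <;> try omega
      · -- i = 1, j ≥ 3 : a ≤ x (j-1)
        have := hmono 1 (j - 1) le_rfl (by omega) (by omega)
        omega
      · -- i = 2, j ≥ 3 : x 1 - a ≤ x (j - 1)
        have := hmono 1 (j - 1) le_rfl (by omega) (by omega)
        omega
      · -- i, j ≥ 3
        exact hmono (i - 1) (j - 1) (by omega) (by omega) (by omega)
    · intro i hi hin
      -- key sum fact for tails starting at ≥ 3
      have tail : ∀ k m : ℕ, 3 ≤ k →
          ∑ j ∈ Finset.Icc k m, y j = ∑ j ∈ Finset.Icc k m, x (j - 1) := by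
        intro k m hk
        apply Finset.sum_congr rfl
        intro j hj
        simp only [Finset.mem_Icc] at hj
        simp only [hy]
        rw [if_neg (by omega), if_neg (by omega)]
      rcases Nat.lt_or_ge i 3 with hi3 | hi3
      · interval_cases i
        · -- i = 1
          rcases eq_or_lt_of_le h2a with heq | hlt
          · left
            refine ⟨1, le_rfl, le_rfl, ?_⟩
            simp only [hy]
            norm_num
            omega
          · right
            simp only [hy]
            norm_num
            omega
        · -- i = 2, so n ≥ 2
          have hn2 : 2 ≤ n := by omega
          have hIcc : Finset.Icc 1 2 = ({1, 2} : Finset ℕ) := by decide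
          have hsum12 : ∑ j ∈ Finset.Icc 1 2, y j = x 1 := by
            rw [hIcc, Finset.sum_pair (by omega)]
            simp only [hy]
            norm_num
            omega
          have := harf 1 le_rfl (by omega)
          rcases this with ⟨k, hk1, hk2, hk3⟩ | hlt
          · -- x 2 = x 1
            have hk : k = 1 := by omega
            subst hk
            rw [Finset.Icc_self, Finset.sum_singleton] at hk3
            have hk3' : x 2 = x 1 := by simpa using hk3
            left
            refine ⟨1, le_rfl, by omega, ?_⟩
            show y 3 = _
            rw [hsum12]
            simp only [hy]
            norm_num
            omega
          · right
            rw [Finset.Icc_self, Finset.sum_singleton] at hlt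
            have hlt' : x 1 < x 2 := by simpa using hlt
            rw [hsum12]
            show _ < y 3
            simp only [hy]
            norm_num
            omega
      · -- i ≥ 3
        have hin' : i - 1 < n := by omega
        have hsum1 : ∑ j ∈ Finset.Icc 1 i, y j = ∑ j ∈ Finset.Icc 1 (i - 1), x j := by
          have e1 : Finset.Icc 1 i = insert 1 (insert 2 (Finset.Icc 3 i)) := by
            ext j; simp only [Finset.mem_Icc, Finset.mem_insert]; omega
          have e2 : Finset.Icc 1 (i - 1) = insert 1 (Finset.Icc 2 (i - 1)) := by
            ext j; simp only [Finset.mem_Icc, Finset.mem_insert]; omega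
          rw [e1, Finset.sum_insert (by simp), Finset.sum_insert (by simp),
            tail 3 i le_rfl, e2, Finset.sum_insert (by simp)]
          have : (Finset.Icc 3 i) = Finset.Icc (2 + 1) ((i - 1) + 1) := by
            congr 1; omega
          rw [this, sum_shift]
          have hy1 : y 1 = a := by simp [hy]
          have hy2 : y 2 = x 1 - a := by simp [hy]
          rw [hy1, hy2]
          omega
        rcases harf (i - 1) (by omega) hin' with ⟨k, hk1, hk2, hk3⟩ | hlt
        · left
          have hxi : x ((i - 1) + 1) = x i := by congr 1; omega
          rw [hxi] at hk3
          rcases Nat.lt_or_ge k 2 with hk' | hk'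
          · -- k = 1
            have : k = 1 := by omega
            subst this
            refine ⟨1, le_rfl, by omega, ?_⟩
            show y (i + 1) = _
            rw [hsum1]
            simp only [hy]
            rw [if_neg (by omega), if_neg (by omega)]
            have : i + 1 - 1 = i := by omega
            rw [this, hk3]
          · -- k ≥ 2 : use k' = k + 1
            refine ⟨k + 1, by omega, by omega, ?_⟩
            show y (i + 1) = _
            have hsumk : ∑ j ∈ Finset.Icc (k + 1) i, y j = ∑ j ∈ Finset.Icc k (i - 1), x j := by
              rw [tail (k + 1) i (by omega)]
              have : Finset.Icc (k + 1) i = Finset.Icc (k + 1) ((i - 1) + 1) := by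
                congr 1; omega
              rw [this, sum_shift]
            rw [hsumk]
            simp only [hy]
            rw [if_neg (by omega), if_neg (by omega)]
            have : i + 1 - 1 = i := by omega
            rw [this, hk3]
        · right
          rw [hsum1]
          have hxi : x ((i - 1) + 1) = x i := by congr 1; omega
          rw [hxi] at hlt
          show _ < y (i + 1)
          simp only [hy]
          rw [if_neg (by omega), if_neg (by omega)]
          have : i + 1 - 1 = i := by omega
          rw [this]
          exact hlt
end

section
/- If m and F are natural numbers with 2 ≤ m < F and m does not divide F, then S = ⟨m⟩ ∪ {F+1, F+2, ...} is an Arf numerical semigroup with Frobenius number F, and every Arf numerical semigroup with Frobenius number F containing m contains S. -/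
theorem multiples_arf (m F : ℕ) (hm : 2 ≤ m) (hmF : m < F) (hdvd : ¬ m ∣ F) :
    IsNumericalSemigroup ({s | m ∣ s} ∪ {n | F + 1 ≤ n}) ∧
    IsArf ({s | m ∣ s} ∪ {n | F + 1 ≤ n}) ∧
    Frob ({s | m ∣ s} ∪ {n | F + 1 ≤ n}) = F ∧
    ∀ T : Set ℕ, IsNumericalSemigroup T → IsArf T → Frob T = F → m ∈ T →
      ({s | m ∣ s} ∪ {n | F + 1 ≤ n}) ⊆ T := by
  set S : Set ℕ := {s | m ∣ s} ∪ {n | F + 1 ≤ n} with hSdef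
  have memS : ∀ n, n ∈ S ↔ m ∣ n ∨ F + 1 ≤ n := by
    intro n; simp [hSdef, Set.mem_union, Set.mem_setOf_eq]
  have hFnot : F ∉ S := by
    rw [memS]; push_neg; exact ⟨hdvd, by omega⟩
  have hNS : IsNumericalSemigroup S := by
    refine ⟨(memS 0).2 (Or.inl (dvd_zero m)), ?_, ?_⟩
    · intro a ha b hb
      rw [memS] at ha hb ⊢
      rcases ha with ha | ha
      · rcases hb with hb | hb
        · exact Or.inl (dvd_add ha hb)
        · exact Or.inr (by omega)
      · exact Or.inr (by omega)
    · apply Set.Finite.subset (Set.finite_Iio (F + 1))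
      intro n hn
      rw [Set.mem_compl_iff, memS] at hn
      push_neg at hn
      exact hn.2
  refine ⟨hNS, ?_, ?_, ?_⟩
  · intro x hx y hy z hz hzy hyx
    rw [memS] at hx hy hz ⊢
    by_cases hxF : F + 1 ≤ x
    · exact Or.inr (by omega)
    · have hx' : m ∣ x := by tauto
      have hy' : m ∣ y := by rcases hy with h | h; exacts [h, absurd (h.trans hyx) hxF]
      have hz' : m ∣ z := by rcases hz with h | h; exacts [h, absurd (h.trans (hzy.trans hyx)) hxF]
      exact Or.inl (Nat.dvd_sub (dvd_add hx' hy') hz')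
  · have h1 : F ∈ Sᶜ := hFnot
    refine le_antisymm (csSup_le ⟨F, h1⟩ ?_) (le_csSup ?_ h1)
    · intro n hn
      rw [Set.mem_compl_iff, memS] at hn
      push_neg at hn
      omega
    · exact ⟨F, fun n hn => by
        rw [Set.mem_compl_iff, memS] at hn; push_neg at hn; omega⟩
  · intro T hT hArf hFrob hmT
    have hmul : ∀ k, k * m ∈ T := by
      intro k
      induction k with
      | zero => simpa using hT.1
      | succ k ih =>
        have := hT.2.1 _ ih _ hmT
        simpa [Nat.succ_mul] using this
    intro n hn
    rw [memS] at hn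
    by_contra hnT
    rcases hn with ⟨k, rfl⟩ | hn
    · exact hnT (by simpa [mul_comm] using hmul k)
    · have : n ≤ Frob T := le_csSup hT.2.2.bddAbove hnT
      omega
end
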